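/- arXiv:1409.5953 — 11 statements merged into one kernel-verified Lean document; each statement's English description precedes it below -/
import Mathlib

section
/- Let L be the restricted wreath product ℤ ≀ ℤ. Then for every n ≥ 1, every word w ∈ FreeGroup (Fin n) that is an E-type iterated identity of L has iterational depth at most 2 in L: L has iterational depth at most 2 with respect to w. -/
noncomputable section

/-- The verbal map: evaluate `w` with the variable of index `0` set to `x`
and the variable of index `i` set to `f i` for `i ≠ 0`. -/
def verbalMap {n : ℕ} [NeZero n] {G : Type*} [Group G] (w : FreeGroup (Fin n))
    (f : Fin n → G) : G → G :=
  fun x => FreeGroup.lift (Function.update f 0 x) w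

/-- `w` is an E-type (Engel type) iterated identity of `G`. -/
def IsEIteratedIdentity {n : ℕ} [NeZero n] (w : FreeGroup (Fin n)) (G : Type*) [Group G] : Prop :=
  ∀ f : Fin n → G, ∃ d : ℕ, 1 ≤ d ∧ (verbalMap w f)^[d] (f 0) = 1

/-- `G` has iterational depth at most `D` with respect to `w`. -/
def DepthAtMost {n : ℕ} [NeZero n] (w : FreeGroup (Fin n)) (G : Type*) [Group G] (D : ℕ) : Prop :=
  ∀ f : Fin n → G, ∃ d : ℕ, 1 ≤ d ∧ d ≤ D ∧ (verbalMap w f)^[d] (f 0) = 1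

/-- The shift automorphism action of `ℤ` on finitely supported configurations,
`(k • c) i = c (i - k)`, as a homomorphism into the automorphism group. -/
def wreathShift (R : Type*) [AddCommGroup R] :
    Multiplicative ℤ →* MulAut (Multiplicative (ℤ →₀ R)) where
  toFun k := AddEquiv.toMultiplicative
    (Finsupp.domCongr (Equiv.addRight (Multiplicative.toAdd k)) : (ℤ →₀ R) ≃+ (ℤ →₀ R))
  map_one' := by
    refine MulEquiv.ext fun c => Multiplicative.toAdd.injective (Finsupp.ext fun i => ?_)
    simp [Finsupp.equivMapDomain_apply, Equiv.Perm.one_def]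
  map_mul' := by
    intro a b
    refine MulEquiv.ext fun c => Multiplicative.toAdd.injective (Finsupp.ext fun i => ?_)
    simp [Finsupp.equivMapDomain_apply, Equiv.Perm.mul_def, Equiv.symm_trans_apply,
      sub_eq_add_neg, add_comm, add_assoc, add_left_comm]

/-- The restricted wreath product `ℤ ≀ ℤ`. -/
abbrev WreathZZ : Type := Multiplicative (ℤ →₀ ℤ) ⋊[wreathShift ℤ] Multiplicative ℤ


/-!
Mapping `ℤ ≀ ℤ` onto its top group `ℤ`, an E-type identity becomes one of `ℤ`. There
`φ_{w,f}(x) = t x + c` with `t` the exponent sum of the distinguished variable, and iterating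
forces `t = 0` and then `c = 0`: `w` is a law of `ℤ`. Hence every value of `φ = φ_{w,f}` lies in
the base group, viewed as `ℤ[T;T⁻¹]` with the shift acting by `T`, and on it `φ` is affine,
`a ↦ q a + b`. Since `w` also dies under the coefficient sum `ℤ ≀ ℤ → ℤ`, the augmentation of `q`
vanishes, so `1 + q + ⋯ + q^{d-1}` is nonzero in the domain `ℤ[T;T⁻¹]` and `φ^d(1) = 1` forces
`b = 0`. Finally `φ^d(φ(f 0)) = 1` reads `q^d a₀ = 0`, so either `φ(f 0) = 1` or `q = 0` and then
`φ(φ(f 0)) = 1`.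
-/

open Multiplicative SemidirectProduct LaurentPolynomial

theorem FreeGroup.map_lift {α G H : Type*} [Group G] [Group H] (π : G →* H) (u : α → G)
    (x : FreeGroup α) : π (lift u x) = lift (π ∘ u) x :=
  DFunLike.congr_fun (ext_hom (π.comp (lift u)) (lift (π ∘ u)) fun a => by simp) x

theorem FreeGroup.lift_mul_apply {α A : Type*} [CommGroup A] (u v : α → A) (x : FreeGroup α) :
    lift (u * v) x = lift u x * lift v x :=
  DFunLike.congr_fun (ext_hom (lift (u * v)) (lift u * lift v) fun a => by simp) x

section VerbalMap

variable {n : ℕ} [NeZero n] {G H : Type*} [Group G] [Group H] {w : FreeGroup (Fin n)}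

theorem verbalMap_update_zero (w : FreeGroup (Fin n)) (f : Fin n → G) (x : G) :
    verbalMap w (Function.update f 0 x) = verbalMap w f := by
  funext y
  simp only [verbalMap, Function.update_idem]

theorem map_verbalMap (π : G →* H) (w : FreeGroup (Fin n)) (f : Fin n → G) (x : G) :
    π (verbalMap w f x) = verbalMap w (π ∘ f) (π x) := by
  rw [verbalMap, verbalMap, FreeGroup.map_lift, Function.comp_update]

theorem IsEIteratedIdentity.exists_iterate_eq_one (hw : IsEIteratedIdentity w G)
    (f : Fin n → G) (x : G) : ∃ d, 1 ≤ d ∧ (verbalMap w f)^[d] x = 1 := by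
  simpa [verbalMap_update_zero] using hw (Function.update f 0 x)

theorem IsEIteratedIdentity.of_surjective (hw : IsEIteratedIdentity w G) (π : G →* H)
    (hπ : Function.Surjective π) : IsEIteratedIdentity w H := by
  intro f
  obtain ⟨g, rfl⟩ := hπ.comp_left f
  obtain ⟨d, hd, hg⟩ := hw g
  have hsemi : Function.Semiconj π (verbalMap w g) (verbalMap w (π ∘ g)) := map_verbalMap π w g
  refine ⟨d, hd, ?_⟩
  show (verbalMap w (π ∘ g))^[d] (π (g 0)) = 1
  rw [← hsemi.iterate_right, hg, map_one]

end VerbalMap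

section CommGroup

variable {n : ℕ} [NeZero n] {A : Type*} [CommGroup A]

theorem verbalMap_eq_mul (w : FreeGroup (Fin n)) (f : Fin n → A) (x : A) :
    verbalMap w f x = verbalMap w (1 : Fin n → A) x * verbalMap w f 1 := by
  have : Function.update f 0 x = Function.update (1 : Fin n → A) 0 x * Function.update f 0 1 := by
    funext i
    rcases eq_or_ne i 0 with rfl | hi <;> simp [*]
  rw [verbalMap, this, FreeGroup.lift_mul_apply]
  rfl

theorem verbalMap_one_mul (w : FreeGroup (Fin n)) (x y : A) :
    verbalMap w (1 : Fin n → A) (x * y) = verbalMap w 1 x * verbalMap w 1 y := by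
  show FreeGroup.lift (Pi.mulSingle 0 (x * y)) w = _
  rw [Pi.mulSingle_mul, FreeGroup.lift_mul_apply]
  rfl

end CommGroup

section Int

variable {n : ℕ} [NeZero n] {w : FreeGroup (Fin n)}

theorem IsEIteratedIdentity.verbalMap_one_eq_one_of_int
    (hw : IsEIteratedIdentity w (Multiplicative ℤ)) (x : Multiplicative ℤ) :
    verbalMap w 1 x = 1 := by
  let ψ : Multiplicative ℤ →* Multiplicative ℤ :=
    MonoidHom.mk' (verbalMap w 1) (verbalMap_one_mul w)
  set t := toAdd (ψ (ofAdd 1))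
  have hψ : ∀ y, toAdd (ψ y) = t * toAdd y := fun y => by rw [ψ.apply_mint, Int.toAdd_zpow]
  have hiter : ∀ d, toAdd (ψ^[d] (ofAdd 1)) = t ^ d := by
    intro d
    induction d with
    | zero => rw [Function.iterate_zero_apply, pow_zero]; rfl
    | succ d ih => rw [Function.iterate_succ_apply', hψ, ih, pow_succ']
  obtain ⟨d, -, hψd⟩ := hw.exists_iterate_eq_one 1 (ofAdd 1)
  change ψ^[d] (ofAdd 1) = 1 at hψd
  have ht : t = 0 := IsNilpotent.eq_zero ⟨d, by rw [← hiter, hψd]; rfl⟩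
  exact toAdd.injective ((hψ x).trans (by rw [ht, zero_mul]; rfl))

theorem IsEIteratedIdentity.lift_eq_one_of_int (hw : IsEIteratedIdentity w (Multiplicative ℤ))
    (u : Fin n → Multiplicative ℤ) : FreeGroup.lift u w = 1 := by
  have hconst : ∀ (f : Fin n → Multiplicative ℤ) x, verbalMap w f x = verbalMap w f 1 :=
    fun f x => by rw [verbalMap_eq_mul, hw.verbalMap_one_eq_one_of_int, one_mul]
  have hvalue : ∀ f : Fin n → Multiplicative ℤ, verbalMap w f 1 = 1 := fun f => by
    obtain ⟨d, hd, hf⟩ := hw f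
    obtain ⟨e, rfl⟩ := Nat.exists_eq_add_of_le' hd
    rwa [Function.iterate_succ_apply', hconst] at hf
  calc FreeGroup.lift u w = verbalMap w u (u 0) := by simp [verbalMap]
    _ = 1 := by rw [hconst, hvalue]

end Int

theorem iterate_mul_add_apply_zero {R : Type*} [Semiring R] (q b : R) (k : ℕ) :
    (fun x => q * x + b)^[k] 0 = (∑ j ∈ Finset.range k, q ^ j) * b := by
  induction k with
  | zero => simp
  | succ k ih => rw [Function.iterate_succ_apply', ih, geom_sum_succ, add_mul, mul_assoc, one_mul]

theorem eq_zero_of_iterate_mul_add_eq_zero {R S : Type*} [Semiring R] [NoZeroDivisors R]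
    [Semiring S] [Nontrivial S] (ε : R →+* S) {q b : R} (hq : ε q = 0) {d : ℕ} (hd : d ≠ 0)
    (h : (fun x => q * x + b)^[d] 0 = 0) : b = 0 := by
  rw [iterate_mul_add_apply_zero] at h
  refine (mul_eq_zero.mp h).resolve_left fun hsum => ?_
  have : ε (∑ j ∈ Finset.range d, q ^ j) = 1 := by
    simp [map_sum, hq, zero_pow_eq, hd]
  exact one_ne_zero (this.symm.trans (by rw [hsum, map_zero]))

theorem SemidirectProduct.mul_inl {N G : Type*} [CommGroup N] [Group G]
    {φ : G →* MulAut N} (h : N ⋊[φ] G) (x : N) :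
    h * inl x = inl (φ h.right x) * h := by
  ext <;> simp [mul_comm]

def toBase (a : ℤ[T;T⁻¹]) : WreathZZ := inl (ofAdd a.coeff)

theorem toBase_add (a b : ℤ[T;T⁻¹]) : toBase (a + b) = toBase a * toBase b :=
  map_mul inl (ofAdd a.coeff) (ofAdd b.coeff)

theorem toBase_zero : toBase 0 = 1 := map_one inl

theorem toBase_neg (a : ℤ[T;T⁻¹]) : toBase (-a) = (toBase a)⁻¹ :=
  map_inv inl (ofAdd a.coeff)

theorem toBase_injective : Function.Injective toBase := fun _ _ h =>
  AddMonoidAlgebra.coeff_injective (ofAdd.injective (inl_injective h))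

theorem toBase_eq_one_iff {a : ℤ[T;T⁻¹]} : toBase a = 1 ↔ a = 0 :=
  toBase_injective.eq_iff' toBase_zero

theorem exists_toBase_eq_of_rightHom_eq_one {x : WreathZZ} (hx : rightHom x = 1) :
    ∃ a, x = toBase a := by
  obtain ⟨c, rfl⟩ : x ∈ (inl : _ →* WreathZZ).range := by
    rwa [range_inl_eq_ker_rightHom, MonoidHom.mem_ker]
  exact ⟨AddMonoidAlgebra.ofCoeff (toAdd c), rfl⟩

theorem wreathShift_ofAdd_coeff (k : Multiplicative ℤ) (a : ℤ[T;T⁻¹]) :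
    wreathShift ℤ k (ofAdd a.coeff) = ofAdd (T (toAdd k) * a).coeff := by
  refine toAdd.injective (Finsupp.ext fun i => ?_)
  rw [toAdd_ofAdd, T, AddMonoidAlgebra.coeff_single_mul_apply]
  simp [wreathShift, Finsupp.equivMapDomain_apply, add_comm]

theorem mul_toBase (h : WreathZZ) (a : ℤ[T;T⁻¹]) :
    h * toBase a = toBase (T (toAdd h.right) * a) * h := by
  rw [toBase, mul_inl, wreathShift_ofAdd_coeff, toBase]

def augmentation : ℤ[T;T⁻¹] →+* ℤ := eval₂ (RingHom.id ℤ) 1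

theorem augmentation_T (k : ℤ) : augmentation (T k) = 1 := by
  simp [augmentation, eval₂_T]

def coeffSum : WreathZZ →* Multiplicative ℤ :=
  SemidirectProduct.lift
    (AddMonoidHom.toMultiplicative
      (augmentation.toAddMonoidHom.comp AddMonoidAlgebra.coeffAddEquiv.symm.toAddMonoidHom))
    1 fun k => by
      refine MonoidHom.ext fun c => ?_
      obtain ⟨a, rfl⟩ : ∃ a : ℤ[T;T⁻¹], ofAdd a.coeff = c := ⟨.ofCoeff (toAdd c), rfl⟩
      simp only [MonoidHom.comp_apply, MonoidHom.one_apply, map_one, MulEquiv.coe_toMonoidHom,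
        MulAut.one_apply]
      change ofAdd (augmentation (.ofCoeff (toAdd (wreathShift ℤ k (ofAdd a.coeff)))))
        = ofAdd (augmentation a)
      rw [wreathShift_ofAdd_coeff, toAdd_ofAdd, AddMonoidAlgebra.ofCoeff_coeff, map_mul,
        augmentation_T, one_mul]

theorem coeffSum_toBase (a : ℤ[T;T⁻¹]) : coeffSum (toBase a) = ofAdd (augmentation a) := by
  rw [coeffSum, toBase, lift_inl]; rfl

theorem exists_verbalMap_toBase_eq {n : ℕ} [NeZero n] (w : FreeGroup (Fin n))
    (f : Fin n → WreathZZ) :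
    ∃ (q : ℤ[T;T⁻¹]) (h : WreathZZ), ∀ a, verbalMap w f (toBase a) = toBase (q * a) * h := by
  induction w using FreeGroup.induction_on with
  | C1 => exact ⟨0, 1, fun a => by simp [verbalMap, toBase_zero]⟩
  | of x =>
    rcases eq_or_ne x 0 with rfl | hx
    · exact ⟨1, 1, fun a => by simp [verbalMap]⟩
    · exact ⟨0, f x, fun a => by simp [verbalMap, hx, toBase_zero]⟩
  | inv_of x ih =>
    obtain ⟨q, h, H⟩ := ih
    refine ⟨-(T (toAdd h⁻¹.right) * q), h⁻¹, fun a => ?_⟩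
    have hinv : verbalMap (FreeGroup.of x)⁻¹ f (toBase a)
        = (verbalMap (FreeGroup.of x) f (toBase a))⁻¹ := map_inv _ _
    rw [hinv, H, mul_inv_rev, ← toBase_neg, mul_toBase, mul_neg, neg_mul, mul_assoc]
  | mul u v ihu ihv =>
    obtain ⟨q₁, h₁, H₁⟩ := ihu
    obtain ⟨q₂, h₂, H₂⟩ := ihv
    refine ⟨q₁ + T (toAdd h₁.right) * q₂, h₁ * h₂, fun a => ?_⟩
    have hmul : verbalMap (u * v) f (toBase a)
        = verbalMap u f (toBase a) * verbalMap v f (toBase a) := map_mul _ _ _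
    rw [hmul, H₁, H₂, mul_assoc, ← mul_assoc h₁, mul_toBase, ← mul_assoc, ← mul_assoc,
      ← toBase_add, add_mul, mul_assoc (T _), mul_assoc]

section Identity

variable {n : ℕ} [NeZero n] {w : FreeGroup (Fin n)}

theorem IsEIteratedIdentity.map_verbalMap_eq_one {G : Type*} [Group G]
    (hw : IsEIteratedIdentity w G) {ρ : G →* Multiplicative ℤ} (hρ : Function.Surjective ρ)
    (π : G →* Multiplicative ℤ) (f : Fin n → G) (x : G) : π (verbalMap w f x) = 1 := by
  rw [map_verbalMap]
  exact (hw.of_surjective ρ hρ).lift_eq_one_of_int _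

theorem IsEIteratedIdentity.exists_verbalMap_toBase_eq_mul_add
    (hw : IsEIteratedIdentity w WreathZZ) (f : Fin n → WreathZZ) :
    ∃ q b : ℤ[T;T⁻¹], augmentation q = 0 ∧ ∀ a, verbalMap w f (toBase a) = toBase (q * a + b) := by
  have hlaw := hw.map_verbalMap_eq_one rightHom_surjective
  obtain ⟨q, h, H⟩ := exists_verbalMap_toBase_eq w f
  obtain ⟨b, rfl⟩ : ∃ b, h = toBase b := by
    refine exists_toBase_eq_of_rightHom_eq_one ?_
    have h1 := hlaw rightHom f (toBase 0)
    rwa [H, mul_zero, toBase_zero, one_mul] at h1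
  have H' : ∀ a, verbalMap w f (toBase a) = toBase (q * a + b) := fun a => by rw [H, toBase_add]
  have haug : ∀ a, augmentation (q * a + b) = 0 := fun a => by
    have h1 := hlaw coeffSum f (toBase a)
    rwa [H', coeffSum_toBase, ofAdd_eq_one] at h1
  have hb := haug 0
  rw [mul_zero, zero_add] at hb
  exact ⟨q, b, by simpa [hb] using haug 1, H'⟩

theorem IsEIteratedIdentity.exists_verbalMap_toBase_eq_mul
    (hw : IsEIteratedIdentity w WreathZZ) (f : Fin n → WreathZZ) :
    ∃ q : ℤ[T;T⁻¹], ∀ a, verbalMap w f (toBase a) = toBase (q * a) := by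
  obtain ⟨q, b, hq, H⟩ := hw.exists_verbalMap_toBase_eq_mul_add f
  have hsemi : Function.Semiconj toBase (fun a => q * a + b) (verbalMap w f) := fun a => (H a).symm
  obtain ⟨d, hd, hd1⟩ := hw.exists_iterate_eq_one f (toBase 0)
  rw [← hsemi.iterate_right, toBase_eq_one_iff] at hd1
  obtain rfl := eq_zero_of_iterate_mul_add_eq_zero augmentation hq (by omega) hd1
  exact ⟨q, by simpa using H⟩

end Identity

/-- The iterational depth of `ℤ ≀ ℤ` is at most `2`:
every E-type iterated identity of `ℤ ≀ ℤ` has iterational depth at most `2`. -/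
theorem wreathZZ_depth_le_two :
    ∀ (n : ℕ) [NeZero n] (w : FreeGroup (Fin n)),
      IsEIteratedIdentity w WreathZZ → DepthAtMost w WreathZZ 2 := by
  intro n _ w hw f
  obtain ⟨q, H⟩ := hw.exists_verbalMap_toBase_eq_mul f
  obtain ⟨a, ha⟩ := exists_toBase_eq_of_rightHom_eq_one
    (hw.map_verbalMap_eq_one rightHom_surjective rightHom f (f 0))
  obtain ⟨d, -, hd⟩ := hw.exists_iterate_eq_one f (toBase a)
  have hsemi : Function.Semiconj toBase (q * ·) (verbalMap w f) := fun a => (H a).symm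
  rw [← hsemi.iterate_right, mul_left_iterate_apply, toBase_eq_one_iff] at hd
  rcases mul_eq_zero.mp hd with hq | rfl
  · refine ⟨2, by norm_num, le_rfl, ?_⟩
    rw [Function.iterate_succ_apply', Function.iterate_one, ha, H, IsNilpotent.eq_zero ⟨d, hq⟩,
      zero_mul, toBase_zero]
  · exact ⟨1, le_rfl, by norm_num, by rw [Function.iterate_one, ha, toBase_zero]⟩
end
end

section
/- Let G be a group, N a finite normal subgroup of G, n ≥ 1, and w ∈ FreeGroup (Fin n) an E-type iterated identity of G. Suppose the quotient group G/N has iterational depth at most D with respect to w. Then G has iterational depth at most (D+1)·(Nat.card N + 1) with respect to w. -/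
noncomputable section

lemma verbalMap_comm {n : ℕ} [NeZero n] {G H : Type*} [Group G] [Group H] (π : G →* H)
    (w : FreeGroup (Fin n)) (f : Fin n → G) (y : G) :
    π (verbalMap w f y) = verbalMap w (π ∘ f) (π y) := by
  have h1 : Function.update (π ∘ f) 0 (π y) = π ∘ Function.update f 0 y := by
    ext i
    rcases eq_or_ne i 0 with rfl | h
    · simp
    · simp [Function.update_of_ne h]
  have h2 : FreeGroup.lift (π ∘ Function.update f 0 y)
      = π.comp (FreeGroup.lift (Function.update f 0 y)) := by
    ext a
    simp
  show π (FreeGroup.lift (Function.update f 0 y) w)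
      = FreeGroup.lift (Function.update (π ∘ f) 0 (π y)) w
  rw [h1, h2]
  rfl

lemma verbalMap_update {n : ℕ} [NeZero n] {G : Type*} [Group G] (w : FreeGroup (Fin n))
    (f : Fin n → G) (z : G) :
    verbalMap w (Function.update f 0 z) = verbalMap w f := by
  funext y
  show FreeGroup.lift (Function.update (Function.update f 0 z) 0 y) w
      = FreeGroup.lift (Function.update f 0 y) w
  rw [Function.update_idem]

/-- If `N` is a finite normal subgroup of `G` and `w` is an E-type iterated identity of `G`
whose iterational depth in `G/N` is at most `D`, then the iterational depth of `w` in `G`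
is at most `(D + 1) * (#N + 1)`. -/
theorem depth_of_finite_normal_subgroup (G : Type*) [Group G] (N : Subgroup G)
    [N.Normal] [Finite N] (n : ℕ) [NeZero n] (w : FreeGroup (Fin n)) (D : ℕ)
    (hw : IsEIteratedIdentity w G) (hq : DepthAtMost w (G ⧸ N) D) :
    DepthAtMost w G ((D + 1) * (Nat.card N + 1)) := by
  intro f
  set π : G →* G ⧸ N := QuotientGroup.mk' N with hπ
  set φ : G → G := verbalMap w f with hφ
  set x : ℕ → G := fun m => φ^[m] (f 0) with hx
  set c : ℕ := Nat.card N with hc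
  have hxadd : ∀ m d : ℕ, x (m + d) = φ^[d] (x m) := by
    intro m d
    show φ^[m + d] (f 0) = φ^[d] (φ^[m] (f 0))
    rw [add_comm m d, Function.iterate_add_apply]
  have hxsucc : ∀ m : ℕ, x (m + 1) = φ (x m) := by
    intro m
    show φ^[m + 1] (f 0) = φ (φ^[m] (f 0))
    rw [Function.iterate_succ_apply']
  -- Key: from any point, within ≤ D steps we land in N
  have A : ∀ m : ℕ, ∃ d : ℕ, 1 ≤ d ∧ d ≤ D ∧ x (m + d) ∈ N := by
    intro m
    obtain ⟨d, hd1, hdD, hd⟩ := hq (Function.update (π ∘ f) 0 (π (x m)))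
    refine ⟨d, hd1, hdD, ?_⟩
    have hvm : verbalMap w (Function.update (π ∘ f) 0 (π (x m))) = verbalMap w (π ∘ f) :=
      verbalMap_update w (π ∘ f) (π (x m))
    have hsc : Function.Semiconj π φ (verbalMap w (π ∘ f)) := fun y =>
      verbalMap_comm π w f y
    have hit := (hsc.iterate_right d) (x m)
    rw [Function.update_self, hvm] at hd
    rw [hd] at hit
    have hmem : φ^[d] (x m) ∈ N := by
      rw [← QuotientGroup.eq_one_iff (φ^[d] (x m))]
      exact hit
    rwa [hxadd]
  choose step hstep1 hstepD hstepN using A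
  set k : ℕ → ℕ := fun j => (fun m => m + step m)^[j + 1] 0 with hk
  have hksucc : ∀ j, k (j + 1) = k j + step (k j) := by
    intro j
    rw [hk]
    simp [Function.iterate_succ_apply']
  have hk0 : k 0 = step 0 := by simp [hk]
  have hkN : ∀ j, x (k j) ∈ N := by
    intro j
    cases j with
    | zero => rw [hk0]; exact (by simpa using hstepN 0)
    | succ j => rw [hksucc j]; exact hstepN (k j)
  have hkmono : StrictMono k := by
    apply strictMono_nat_of_lt_succ
    intro j
    rw [hksucc j]
    have := hstep1 (k j)
    omega
  have hk1 : ∀ j, 1 ≤ k j := by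
    intro j
    have h0 : k 0 ≤ k j := hkmono.monotone (Nat.zero_le j)
    have := hstep1 0
    omega
  have hkbound : ∀ j, k j ≤ (j + 1) * D := by
    intro j
    induction j with
    | zero => rw [hk0]; simpa using hstepD 0
    | succ j ih =>
      rw [hksucc j]
      have := hstepD (k j)
      calc k j + step (k j) ≤ (j + 1) * D + D := by omega
        _ = (j + 1 + 1) * D := by ring
  -- pigeonhole
  have : Fintype N := Fintype.ofFinite N
  have hcard : Fintype.card N < Fintype.card (Fin (c + 1)) := by
    simp [hc, Nat.card_eq_fintype_card]
  obtain ⟨i, j, hij, hxij⟩ := Fintype.exists_ne_map_eq_of_card_lt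
    (fun j : Fin (c + 1) => (⟨x (k j), hkN j⟩ : N)) hcard
  have hxij' : x (k i) = x (k j) := congrArg Subtype.val hxij
  obtain ⟨a, b, hab, ha1, hxab, hble⟩ :
      ∃ a b : ℕ, a < b ∧ 1 ≤ a ∧ x a = x b ∧ b ≤ (c + 1) * D := by
    rcases lt_or_gt_of_ne hij with h | h
    · exact ⟨k i, k j, hkmono (by exact_mod_cast h), hk1 i, hxij', by
        calc k (j : ℕ) ≤ k c := hkmono.monotone (by omega)
          _ ≤ (c + 1) * D := hkbound c⟩
    · exact ⟨k j, k i, hkmono (by exact_mod_cast h), hk1 j, hxij'.symm, by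
        calc k (i : ℕ) ≤ k c := hkmono.monotone (by omega)
          _ ≤ (c + 1) * D := hkbound c⟩
  set p : ℕ := b - a with hp
  have hp0 : 0 < p := by omega
  -- periodicity
  have hper : ∀ t : ℕ, x (a + t + p) = x (a + t) := by
    intro t
    induction t with
    | zero =>
      have : a + 0 + p = b := by omega
      rw [this]
      simpa using hxab.symm
    | succ t ih =>
      have e1 : a + (t + 1) + p = (a + t + p) + 1 := by omega
      have e2 : a + (t + 1) = (a + t) + 1 := by omega
      rw [e1, e2, hxsucc, hxsucc, ih]
  have hperq : ∀ q t : ℕ, x (a + t + p * q) = x (a + t) := by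
    intro q
    induction q with
    | zero => intro t; simp
    | succ q ih =>
      intro t
      have e1 : a + t + p * (q + 1) = a + (t + p) + p * q := by ring
      have e2 : a + (t + p) = a + t + p := by ring
      rw [e1, ih (t + p), e2, hper t]
  -- finish using hw
  obtain ⟨e, he1, he⟩ := hw f
  have hxe : x e = 1 := he
  by_cases hcase : e ≤ (D + 1) * (c + 1)
  · exact ⟨e, he1, hcase, he⟩
  · push_neg at hcase
    have hea : a < e := by nlinarith
    set r : ℕ := (e - a) % p with hr
    have hdiv : p * ((e - a) / p) + (e - a) % p = e - a := Nat.div_add_mod (e - a) p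
    have heq : e = a + r + p * ((e - a) / p) := by omega
    have hxd : x (a + r) = 1 := by
      rw [← hperq ((e - a) / p) r, ← heq, hxe]
    refine ⟨a + r, by omega, ?_, hxd⟩
    have hrp : r < p := Nat.mod_lt _ hp0
    have : a + r < b := by omega
    nlinarith
end
end

section
/- Let G be a group and H a subgroup of G contained in the center of G. Let n ≥ 1 and let w ∈ FreeGroup (Fin n) be an E-type iterated identity of G such that for every i : Fin n the exponent sum of the variable x_i in w equals 0 (i.e., the homomorphism FreeGroup (Fin n) →* Multiplicative ℤ sending x_i to (Multiplicative.ofAdd 1) and x_j to 1 for j ≠ i maps w to 1). If the quotient group G/H has iterational depth at most D with respect to w, then G has iterational depth at most 2D+1 with respect to w. -/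
noncomputable section

/-- The exponent-sum homomorphism of the variable `x_i`: it sends `x_i` to
`Multiplicative.ofAdd 1` and all other generators to `1`. -/
def expSumHom {n : ℕ} (i : Fin n) : FreeGroup (Fin n) →* Multiplicative ℤ :=
  FreeGroup.lift (fun j => if j = i then Multiplicative.ofAdd 1 else 1)

/-- The auxiliary homomorphism `(g, t) ↦ z^t * g` for central `z`. -/
def centMul {G : Type*} [Group G] (z : G) (hz : z ∈ Subgroup.center G) :
    G × Multiplicative ℤ →* G where
  toFun p := z ^ (Multiplicative.toAdd p.2) * p.1
  map_one' := by simp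
  map_mul' p q := by
    have hc : ∀ (m : ℤ) (g : G), g * z ^ m = z ^ m * g := fun m g =>
      Subgroup.mem_center_iff.mp (Subgroup.zpow_mem _ hz m) g
    simp only [Prod.snd_mul, Prod.fst_mul, toAdd_mul, zpow_add]
    rw [mul_assoc, mul_assoc, ← mul_assoc p.1, hc, mul_assoc]

/-- Central elements multiplied into the argument are absorbed by the verbal map
when the exponent sum of the variable `x₀` in `w` is zero. -/
lemma verbal_central {n : ℕ} [NeZero n] {G : Type*} [Group G] (w : FreeGroup (Fin n))
    (f : Fin n → G) (hexp : expSumHom (0 : Fin n) w = 1)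
    {z : G} (hz : z ∈ Subgroup.center G) (x : G) :
    verbalMap w f (z * x) = verbalMap w f x := by
  set θ : FreeGroup (Fin n) →* G × Multiplicative ℤ :=
    FreeGroup.lift (fun j => (Function.update f 0 x j, if j = 0 then Multiplicative.ofAdd 1 else 1))
  have h1 : (centMul z hz).comp θ = FreeGroup.lift (Function.update f 0 (z * x)) := by
    ext j
    by_cases hj : j = 0 <;>
      simp [θ, centMul, hj, Function.update_apply]
  have h2 : (MonoidHom.snd G (Multiplicative ℤ)).comp θ = expSumHom (0 : Fin n) := by
    ext j; simp [θ, expSumHom]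
  have h3 : (θ w).2 = 1 := by
    have := congrArg (fun φ => φ w) h2
    simpa [hexp] using this
  have h4 : (θ w).1 = FreeGroup.lift (Function.update f 0 x) w := by
    have : (MonoidHom.fst G (Multiplicative ℤ)).comp θ
        = FreeGroup.lift (Function.update f 0 x) := by ext j; simp [θ]
    exact congrArg (fun φ => φ w) this
  have := congrArg (fun φ => φ w) h1
  simp only [MonoidHom.comp_apply] at this
  rw [verbalMap, verbalMap, ← this]
  simp [centMul, h3, h4]

/-- The verbal map commutes with group homomorphisms. -/
lemma verbal_comp {n : ℕ} [NeZero n] {G Q : Type*} [Group G] [Group Q] (w : FreeGroup (Fin n))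
    (φ : G →* Q) (f : Fin n → G) (x : G) :
    φ (verbalMap w f x) = verbalMap w (⇑φ ∘ f) (φ x) := by
  have h : FreeGroup.lift (⇑φ ∘ Function.update f 0 x)
      = φ.comp (FreeGroup.lift (Function.update f 0 x)) := by
    ext j; simp
  rw [verbalMap, verbalMap, ← Function.comp_update, h, MonoidHom.comp_apply]

/-- Iterates of the verbal map commute with group homomorphisms. -/
lemma verbal_comp_iter {n : ℕ} [NeZero n] {G Q : Type*} [Group G] [Group Q]
    (w : FreeGroup (Fin n)) (φ : G →* Q) (f : Fin n → G) (x : G) (k : ℕ) :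
    φ ((verbalMap w f)^[k] x) = (verbalMap w (⇑φ ∘ f))^[k] (φ x) := by
  induction k generalizing x with
  | zero => simp
  | succ k ih =>
    rw [Function.iterate_succ_apply, Function.iterate_succ_apply, ih, verbal_comp]

/-- Central extension: if `H` is a central subgroup of `G` and `w` is an E-type iterated
identity of `G` in which every variable has exponent sum `0`, and `G/H` has iterational
depth at most `D` with respect to `w`, then `G` has iterational depth at most `2D + 1`. -/
theorem depth_of_central_subgroup (G : Type*) [Group G] (H : Subgroup G)
    (hH : H ≤ Subgroup.center G)
    (n : ℕ) [NeZero n] (w : FreeGroup (Fin n))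
    (hexp : ∀ i : Fin n, expSumHom i w = 1)
    (D : ℕ) (hw : IsEIteratedIdentity w G) :
    haveI : H.Normal := ⟨fun x hx g => by
      have h := (Subgroup.mem_center_iff.mp (hH hx)) g
      rw [h, mul_inv_cancel_right]; exact hx⟩
    DepthAtMost w (G ⧸ H) D → DepthAtMost w G (2 * D + 1) := by
  haveI : H.Normal := ⟨fun x hx g => by
    have h := (Subgroup.mem_center_iff.mp (hH hx)) g
    rw [h, mul_inv_cancel_right]; exact hx⟩
  intro hq f
  set φ := verbalMap w f with hφ
  have hHabs : ∀ h ∈ H, φ h = φ 1 := fun h hh => by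
    have := verbal_central w f (hexp 0) (hH hh) 1
    simpa using this
  let mk : G →* G ⧸ H := QuotientGroup.mk' H
  -- Step 1: in at most D steps we land in H.
  obtain ⟨d1, hd1a, hd1b, hd1⟩ := hq (⇑mk ∘ f)
  have h1 : φ^[d1] (f 0) ∈ H := by
    have hco := verbal_comp_iter w mk f (f 0) d1
    have : mk (φ^[d1] (f 0)) = 1 := by rw [hco]; exact hd1
    exact (QuotientGroup.eq_one_iff _).mp this
  set c := φ 1 with hc
  have hc1 : φ^[d1 + 1] (f 0) = c := by
    rw [Function.iterate_succ_apply', hHabs _ h1]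
  -- Step 2: starting from c, in at most D steps we land in H again, giving periodicity.
  obtain ⟨d2, hd2a, hd2b, hd2⟩ := hq (⇑mk ∘ Function.update f 0 c)
  have hup : verbalMap w (Function.update f 0 c) = φ := by
    funext x
    show FreeGroup.lift (Function.update (Function.update f 0 c) 0 x) w = _
    rw [Function.update_idem]; rfl
  have h2 : φ^[d2] c ∈ H := by
    have hco := verbal_comp_iter w mk (Function.update f 0 c) (Function.update f 0 c 0) d2
    rw [hup] at hco
    have : mk (φ^[d2] (Function.update f 0 c 0)) = 1 := by rw [hco]; exact hd2
    simpa using (QuotientGroup.eq_one_iff _).mp this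
  set p := d2 + 1 with hp
  have hper : φ^[p] c = c := by
    rw [hp, Function.iterate_succ_apply', hHabs _ h2]
  have hmod : ∀ k : ℕ, φ^[k] c = φ^[k % p] c := fun k => by
    conv_lhs => rw [← Nat.mod_add_div k p]
    rw [Function.iterate_add_apply, Function.iterate_mul, Function.iterate_fixed hper]
  -- Step 3: combine with the E-type identity.
  obtain ⟨e, he1, he⟩ := hw f
  by_cases hcase : e ≤ d1
  · exact ⟨e, he1, by omega, he⟩
  · obtain ⟨k, hk⟩ : ∃ k, e = k + (d1 + 1) := ⟨e - (d1 + 1), by omega⟩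
    have hbk : φ^[k] c = 1 := by
      have h := he
      rw [hk, Function.iterate_add_apply, hc1] at h
      exact h
    have hlt : k % p < p := Nat.mod_lt _ (by omega)
    refine ⟨d1 + 1 + k % p, by omega, by omega, ?_⟩
    rw [show d1 + 1 + k % p = k % p + (d1 + 1) by omega,
      Function.iterate_add_apply, hc1, ← hmod, hbk]
end
end

section
/- Let G be a group containing a non-abelian free subgroup, i.e., suppose there exists an injective group homomorphism from FreeGroup (Fin 2) into G. Then G satisfies no non-trivial E-type iterated identity: for every n ≥ 1 and every w ∈ FreeGroup (Fin n) with w ≠ 1, the word w is not an E-type iterated identity of G. -/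
noncomputable section

/-!
Through the free subgroup of rank two, `FreeGroup (Fin n)` embeds in `G`; evaluating `w` at the
images of the free generators `xᵢ` turns the orbit of the verbal map into the image of the orbit
`σ^[d] x₀` of the endomorphism `σ` of the free group that sends `x₀ ↦ w` and fixes the other
generators. If `w` lies in the subgroup `A` generated by `x₁, …, xₙ₋₁`, then `σ` fixes `w` and
the orbit is constantly `w ≠ 1`. Otherwise `σ` is injective: its image `H` is free
(Nielsen–Schreier) of rank at most `n` (a quotient of `Fₙ`) and at least `n - 1` (it contains `A`
and retracts onto it). Free groups of finite rank are Hopfian, so rank `n` makes `Fₙ ↠ H` an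
isomorphism, while rank `n - 1` makes the retraction `H → A` injective, forcing `w ∈ A`.
Hopficity comes from residual finiteness, via Sanov's ping-pong embedding of free groups into
`SL(2, ℤ)` followed by reduction modulo `m`.
-/

open Function

namespace Group.ResiduallyFinite

theorem of_injective {G G' : Type*} [Group G] [Group G'] [ResiduallyFinite G'] {f : G →* G'}
    (hf : Injective f) : ResiduallyFinite G := by
  rw [residuallyFinite_iff_forall_finiteIndexNormalSubgroup]
  intro g hg
  apply hf
  rw [map_one]
  exact eq_one_iff_forall_finiteIndexNormalSubroup (f g) fun K => hg (K.comap f)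

end Group.ResiduallyFinite

theorem Group.FG.finite_monoidHom {G Q : Type*} [Group G] [Group Q] [Group.FG G] [Finite Q] :
    Finite (G →* Q) := by
  obtain ⟨α, _, φ, hφ⟩ := Group.fg_iff_exists_freeGroup_hom_surjective_finite.mp ‹Group.FG G›
  have : Finite (FreeGroup α →* Q) := Finite.of_equiv _ FreeGroup.lift
  exact Finite.of_injective (fun χ : G →* Q => χ.comp φ) fun _ _ h =>
    (MonoidHom.cancel_right hφ).mp h

theorem MonoidHom.injective_of_surjective_of_residuallyFinite {G : Type*} [Group G] [Group.FG G]
    [Group.ResiduallyFinite G] {f : G →* G} (hf : Surjective f) : Injective f := by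
  rw [injective_iff_map_eq_one]
  intro g hg
  by_contra hg1
  obtain ⟨N, hgN⟩ := Group.exists_finiteIndexNormalSubgroup_notMem g hg1
  have : Finite (G →* G ⧸ N.toSubgroup) := Group.FG.finite_monoidHom
  have hprecomp : Injective fun χ : G →* G ⧸ N.toSubgroup => χ.comp f :=
    fun _ _ h => (MonoidHom.cancel_right hf).mp h
  obtain ⟨χ, hχ⟩ := Finite.surjective_of_injective hprecomp (QuotientGroup.mk' N.toSubgroup)
  apply hgN
  rw [← FiniteIndexNormalSubgroup.mem_toSubgroup_iff, ← QuotientGroup.eq_one_iff,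
    ← QuotientGroup.mk'_apply, ← hχ, MonoidHom.comp_apply, hg, map_one]

instance Matrix.SpecialLinearGroup.residuallyFinite_int {ι : Type*} [Fintype ι] [DecidableEq ι] :
    Group.ResiduallyFinite (Matrix.SpecialLinearGroup ι ℤ) := by
  refine Group.residuallyFinite_of_forall_exists_finite_monoidHom fun M hM => ?_
  obtain ⟨i, j, hij⟩ : ∃ i j, M i j ≠ (1 : Matrix ι ι ℤ) i j := by
    by_contra! h
    exact hM (Subtype.ext (Matrix.ext h))
  set d := M i j - (1 : Matrix ι ι ℤ) i j
  refine ⟨SpecialLinearGroup ι (ZMod (d.natAbs + 1)), inferInstance, inferInstance,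
    SpecialLinearGroup.map (Int.castRingHom _), fun h => ?_⟩
  have hentry : ((M i j : ℤ) : ZMod (d.natAbs + 1)) = (((1 : Matrix ι ι ℤ) i j : ℤ) : ZMod _) := by
    have := congrArg (fun A : SpecialLinearGroup ι (ZMod (d.natAbs + 1)) => A i j) h
    simpa [SpecialLinearGroup.map_apply_coe, Matrix.one_apply, apply_ite] using this
  have hdvd : ((d.natAbs + 1 : ℕ) : ℤ) ∣ d := by
    rw [← ZMod.intCast_zmod_eq_zero_iff_dvd, Int.cast_sub, hentry, sub_self]
  have := Nat.le_of_dvd (Int.natAbs_pos.mpr (sub_ne_zero.mpr hij)) (Int.natAbs_dvd_natAbs.mpr hdvd)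
  omega

open scoped Pointwise in
lemma conj_smul_compl_subset {G α : Type*} [Group G] [MulAction G α] {a : G} {X Y : Set α}
    (h : a • Yᶜ ⊆ X) (g : G) : (g * a * g⁻¹) • (g • Y)ᶜ ⊆ g • X := by
  rw [← Set.smul_set_compl, mul_smul, mul_smul, inv_smul_smul]
  exact Set.smul_set_mono h

namespace Sanov

open Matrix MatrixGroups UpperHalfPlane ModularGroup Pointwise

def lowerUnipotent (m : ℤ) : SL(2, ℤ) := ⟨!![1, 0; m, 1], by simp [Matrix.det_fin_two_of]⟩

lemma lowerUnipotent_mul (a b : ℤ) :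
    lowerUnipotent a * lowerUnipotent b = lowerUnipotent (a + b) := by
  apply Subtype.ext
  show !![1, 0; (a : ℤ), 1] * !![1, 0; b, 1] = !![1, 0; a + b, 1]
  simp

lemma lowerUnipotent_inv (m : ℤ) : (lowerUnipotent m)⁻¹ = lowerUnipotent (-m) := by
  rw [inv_eq_iff_mul_eq_one, lowerUnipotent_mul, add_neg_cancel]
  apply Subtype.ext
  simp [lowerUnipotent, Matrix.one_fin_two]

lemma coe_lowerUnipotent_smul (m : ℤ) (z : ℍ) :
    ((lowerUnipotent m • z : ℍ) : ℂ) = z / (m * z + 1) := by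
  rw [coe_specialLinearGroup_apply]
  simp [lowerUnipotent]

def disk (c : ℝ) : Set ℍ := {z | ‖(z : ℂ) - c‖ ≤ 1 / 2}

lemma mem_disk {c : ℝ} {z : ℍ} : z ∈ disk c ↔ ‖(z : ℂ) - c‖ ≤ 1 / 2 := Iff.rfl

lemma disk_nonempty (c : ℝ) : (disk c).Nonempty :=
  ⟨⟨c + Complex.I / 2, by simp⟩, by simp [mem_disk]⟩

/-- Closed disks whose centres are `1` apart only touch on the real axis, which `ℍ` avoids. -/
lemma disjoint_disk {c c' : ℝ} (h : 1 ≤ |c - c'|) : Disjoint (disk c) (disk c') := by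
  have hre : ∀ {c : ℝ} {z : ℍ}, z ∈ disk c → |z.re - c| < 1 / 2 := fun {c z} hz =>
    calc |z.re - c| = |((z : ℂ) - c).re| := by simp
      _ < ‖(z : ℂ) - c‖ := Complex.abs_re_lt_norm.mpr (by simpa using z.im_pos.ne')
      _ ≤ 1 / 2 := hz
  refine Set.disjoint_left.mpr fun z hz hz' => ?_
  have := abs_sub_le c z.re c'
  rw [abs_sub_comm c z.re] at this
  linarith [hre hz, hre hz']

lemma disjoint_disk_add_intCast (c : ℝ) {a b : ℤ} (h : a ≠ b) :
    Disjoint (disk (c + a)) (disk (c + b)) := by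
  apply disjoint_disk
  rw [add_sub_add_left_eq_sub, ← Int.cast_sub, ← Int.cast_abs]
  exact_mod_cast Int.one_le_abs (sub_ne_zero.mpr h)

lemma T_zpow_smul_disk (m : ℤ) (c : ℝ) : T ^ m • disk c = disk (c + m) := by
  ext z
  rw [Set.mem_smul_set_iff_inv_smul_mem, ← _root_.zpow_neg, mem_disk, mem_disk,
    coe_T_zpow_smul_eq]
  push_cast
  ring_nf

lemma lowerUnipotent_smul_mem_disk {m : ℤ} (hm : |m| = 2) {z : ℍ} (hz : z ∉ disk (-1 / m)) :
    lowerUnipotent m • z ∈ disk (1 / m) := by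
  have hm' : ‖(m : ℂ)‖ = 2 := by rw [Complex.norm_intCast, ← Int.cast_abs, hm]; norm_num
  have hm0 : (m : ℂ) ≠ 0 := norm_pos_iff.mp (by linarith)
  have hden : 1 < ‖(m : ℂ) * z + 1‖ := by
    rw [mem_disk, not_le] at hz
    rw [show (m : ℂ) * z + 1 = m * ((z : ℂ) - ((-1 / m : ℝ) : ℂ)) by push_cast; field_simp; ring,
      norm_mul, hm']
    linarith
  have hden0 : (m : ℂ) * z + 1 ≠ 0 := norm_pos_iff.mp (by linarith)
  have hdiff : (z : ℂ) / (m * z + 1) - ((1 / m : ℝ) : ℂ) = -((m : ℂ) * (m * z + 1))⁻¹ := by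
    have hu := mul_inv_cancel₀ hden0
    have hv := mul_inv_cancel₀ hm0
    push_cast
    rw [mul_inv, div_eq_mul_inv, one_div]
    linear_combination (-(z : ℂ) * ((m : ℂ) * z + 1)⁻¹) * hv + (m : ℂ)⁻¹ * hu
  rw [mem_disk, coe_lowerUnipotent_smul, hdiff, norm_neg, norm_inv, norm_mul, hm',
    inv_le_comm₀ (by positivity) (by norm_num)]
  linarith

lemma lowerUnipotent_smul_compl_disk {m : ℤ} (hm : |m| = 2) :
    lowerUnipotent m • (disk (-1 / m))ᶜ ⊆ disk (1 / m) := by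
  rintro _ ⟨z, hz, rfl⟩
  exact lowerUnipotent_smul_mem_disk hm hz

theorem injective_lift_conj_lowerUnipotent {ι : Type} [Nontrivial ι] {k : ι → ℤ}
    (hk : Injective k) :
    Injective (FreeGroup.lift fun i => T ^ (2 * k i) * lowerUnipotent 2 * (T ^ (2 * k i))⁻¹) := by
  have h2 : lowerUnipotent 2 • (disk (-1 / 2))ᶜ ⊆ disk (1 / 2) := by
    simpa using lowerUnipotent_smul_compl_disk (m := 2) (by norm_num)
  have h2' : lowerUnipotent (-2) • (disk (1 / 2))ᶜ ⊆ disk (-1 / 2) := by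
    have := lowerUnipotent_smul_compl_disk (m := -2) (by norm_num)
    norm_num at this ⊢
    exact this
  have hk2 : ∀ {i j}, i ≠ j → 2 * k i ≠ 2 * k j := fun hij => by have := hk.ne hij; omega
  refine FreeGroup.injective_lift_of_ping_pong _ (fun i => disk (1 / 2 + (2 * k i : ℤ)))
    (fun i => disk (-1 / 2 + (2 * k i : ℤ))) (fun i => disk_nonempty _)
    (fun i j hij => disjoint_disk_add_intCast _ (hk2 hij))
    (fun i j hij => disjoint_disk_add_intCast _ (hk2 hij)) (fun i j => ?_) (fun i => ?_)
    (fun i => ?_)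
  · have : (-1 / 2 : ℝ) + (2 * k j : ℤ) = 1 / 2 + (2 * k j - 1 : ℤ) := by push_cast; ring
    rw [this]
    exact disjoint_disk_add_intCast _ (by omega)
  · simp only [← T_zpow_smul_disk]
    exact conj_smul_compl_subset h2 _
  · simp only [← T_zpow_smul_disk, Pi.inv_apply, conj_inv, lowerUnipotent_inv]
    exact conj_smul_compl_subset h2' _

end Sanov

namespace FreeGroup

open MatrixGroups ModularGroup Sanov

theorem exists_injective_fin_two (α : Type*) [Countable α] :
    ∃ ψ : FreeGroup α →* FreeGroup (Fin 2), Injective ψ := by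
  obtain ⟨e, he⟩ := Countable.exists_injective_nat α
  let conjPow : ℕ → FreeGroup (Fin 2) := fun i => of 0 ^ (i : ℤ) * of 1 * (of 0 ^ (i : ℤ))⁻¹
  let toSL : FreeGroup (Fin 2) →* SL(2, ℤ) := lift ![T ^ (2 : ℤ), lowerUnipotent 2]
  have hcomp : toSL.comp (lift conjPow) =
      lift fun i : ℕ => T ^ (2 * (i : ℤ)) * lowerUnipotent 2 * (T ^ (2 * (i : ℤ)))⁻¹ := by
    refine ext_hom _ _ fun i => ?_
    simp [toSL, conjPow, _root_.zpow_mul]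
  have hinj : Injective (lift conjPow) := by
    have := injective_lift_conj_lowerUnipotent (k := ((↑) : ℕ → ℤ)) Nat.cast_injective
    rw [← hcomp, MonoidHom.coe_comp] at this
    exact this.of_comp
  exact ⟨(lift conjPow).comp (map e), hinj.comp (map_injective he)⟩

instance residuallyFinite {α : Type*} [Countable α] : Group.ResiduallyFinite (FreeGroup α) := by
  obtain ⟨e, he⟩ := Countable.exists_injective_nat α
  have hpp := injective_lift_conj_lowerUnipotent (k := ((↑) : ℕ → ℤ)) Nat.cast_injective
  exact Group.ResiduallyFinite.of_injective (f := (lift _).comp (map e))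
    (hpp.comp (map_injective he))

theorem card_le_of_surjective {α β : Type*} [Finite α] {f : FreeGroup α →* FreeGroup β}
    (hf : Surjective f) : Finite β ∧ Nat.card β ≤ Nat.card α := by
  classical
  let Q := Multiplicative (ZMod 2)
  let restrict : (β → Q) → (α → Q) := fun h => lift.symm ((lift h).comp f)
  have hinj : Injective restrict := fun h h' hres => by
    simpa using (MonoidHom.cancel_right hf).mp (lift.symm.injective hres)
  have : Finite β := by
    have : Finite (β → Q) := Finite.of_injective restrict hinj
    refine Finite.of_injective (fun b => Pi.mulSingle b (Multiplicative.ofAdd (1 : ZMod 2)))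
      fun b b' hbb => ?_
    by_contra hne
    simpa [Pi.mulSingle_eq_of_ne hne] using congrFun hbb b
  refine ⟨this, ?_⟩
  have := Nat.card_le_card_of_injective restrict hinj
  rw [Nat.card_fun, Nat.card_fun] at this
  exact (Nat.pow_le_pow_iff_right (by simp [Q])).mp this

theorem injective_of_surjective_of_card_eq {α β : Type*} [Finite α] [Finite β]
    (h : Nat.card α = Nat.card β) {f : FreeGroup α →* FreeGroup β} (hf : Surjective f) :
    Injective f := by
  obtain ⟨e⟩ := Finite.card_eq.mp h.symm
  have := MonoidHom.injective_of_surjective_of_residuallyFinite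
    (f := (freeGroupCongr e).toMonoidHom.comp f) ((freeGroupCongr e).surjective.comp hf)
  exact Injective.of_comp (f := freeGroupCongr e) this

variable {ι : Type*} [DecidableEq ι]

def subst (i : ι) (w : FreeGroup ι) : FreeGroup ι →* FreeGroup ι :=
  lift (update of i w)

@[simp]
lemma subst_of_self (i : ι) (w : FreeGroup ι) : subst i w (of i) = w := by
  simp [subst]

lemma subst_of_of_ne {i j : ι} (h : j ≠ i) (w : FreeGroup ι) : subst i w (of j) = of j := by
  simp [subst, h]

lemma subst_comp_subst (i : ι) (g h : FreeGroup ι) :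
    (subst i g).comp (subst i h) = subst i (subst i g h) := by
  ext j
  by_cases hj : j = i
  · obtain rfl := hj
    simp
  · simp [subst_of_of_ne hj]

lemma subst_map_val (i : ι) (w : FreeGroup ι) (y : FreeGroup {j // j ≠ i}) :
    subst i w (map Subtype.val y) = map Subtype.val y := by
  have : (subst i w).comp (map Subtype.val) = map (Subtype.val : {j // j ≠ i} → ι) := by
    ext j
    simp [subst_of_of_ne j.2]
  exact DFunLike.congr_fun this y

def eraseGen (i : ι) : FreeGroup ι →* FreeGroup {j // j ≠ i} :=
  lift fun j => if h : j = i then 1 else of ⟨j, h⟩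

lemma eraseGen_map_val (i : ι) (y : FreeGroup {j // j ≠ i}) :
    eraseGen i (map Subtype.val y) = y := by
  have : (eraseGen i).comp (map Subtype.val) = MonoidHom.id _ := by
    ext j
    simp [eraseGen, j.2]
  exact DFunLike.congr_fun this y

theorem subst_injective [Finite ι] {i : ι} {w : FreeGroup ι}
    (hw : w ∉ (map (Subtype.val : {j // j ≠ i} → ι)).range) : Injective (subst i w) := by
  set H := (subst i w).range
  let e := IsFreeGroup.toFreeGroup H
  have hq : Surjective (e.toMonoidHom.comp (subst i w).rangeRestrict) :=
    e.surjective.comp (MonoidHom.rangeRestrict_surjective _)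
  obtain ⟨_, hle⟩ := card_le_of_surjective hq
  have hmem : ∀ y, map Subtype.val y ∈ H := fun y => ⟨_, subst_map_val i w y⟩
  let r := (eraseGen i).comp (H.subtype.comp e.symm.toMonoidHom)
  have hr : Surjective r := fun y => ⟨e ⟨_, hmem y⟩, by simp [r, eraseGen_map_val]⟩
  obtain ⟨_, hge⟩ := card_le_of_surjective hr
  have hcard : Nat.card {j // j ≠ i} + 1 = Nat.card ι := by
    have := Fintype.ofFinite ι
    rw [Nat.card_eq_fintype_card, Nat.card_eq_fintype_card, Fintype.card_subtype_compl,
      Fintype.card_subtype_eq]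
    have := Fintype.card_pos_iff.mpr ⟨i⟩
    omega
  rcases (by omega : Nat.card (IsFreeGroup.Generators H) = Nat.card ι ∨
      Nat.card {j // j ≠ i} = Nat.card (IsFreeGroup.Generators H)) with h | h
  · have := injective_of_surjective_of_card_eq h.symm hq
    exact MonoidHom.rangeRestrict_injective_iff.mp (Injective.of_comp (f := e) this)
  · have hwH : w ∈ H := ⟨of i, subst_of_self i w⟩
    have := injective_of_surjective_of_card_eq h.symm hr
      (a₁ := e ⟨_, hmem (eraseGen i w)⟩) (a₂ := e ⟨w, hwH⟩) (by simp [r, eraseGen_map_val])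
    exact (hw ⟨eraseGen i w, congrArg Subtype.val (e.injective this)⟩).elim

theorem iterate_subst_of_self_ne_one [Finite ι] {i : ι} {w : FreeGroup ι} (hw : w ≠ 1) {d : ℕ}
    (hd : d ≠ 0) : (subst i w)^[d] (of i) ≠ 1 := by
  by_cases hA : w ∈ (map (Subtype.val : {j // j ≠ i} → ι)).range
  · obtain ⟨y, rfl⟩ := hA
    obtain ⟨d, rfl⟩ := Nat.exists_eq_succ_of_ne_zero hd
    rwa [iterate_succ_apply, subst_of_self, iterate_fixed (subst_map_val i _ y)]
  · intro h
    refine of_ne_one i ((subst_injective hA).iterate d ?_)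
    rw [h, iterate_fixed (_root_.map_one (subst i w))]

end FreeGroup

section VerbalMap

variable {n : ℕ} [NeZero n]

lemma semiconj_verbalMap {G H : Type*} [Group G] [Group H] (w : FreeGroup (Fin n))
    (f : Fin n → G) (ψ : G →* H) : Semiconj ψ (verbalMap w f) (verbalMap w (ψ ∘ f)) := fun x => by
  rw [verbalMap, verbalMap, ← comp_update]
  exact FreeGroup.lift_unique (f := ψ ∘ update f 0 x) (ψ.comp (FreeGroup.lift _)) fun _ => by simp

lemma iterate_verbalMap_of (w : FreeGroup (Fin n)) (d : ℕ) :
    (verbalMap w FreeGroup.of)^[d] (FreeGroup.of 0) =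
      (FreeGroup.subst 0 w)^[d] (FreeGroup.of 0) := by
  have hcomm : Function.Commute (verbalMap w FreeGroup.of) (FreeGroup.subst 0 w) := fun x =>
    (DFunLike.congr_fun (FreeGroup.subst_comp_subst 0 w x) w).symm
  have hstart : verbalMap w FreeGroup.of (FreeGroup.of 0) = w := by
    simp [verbalMap, FreeGroup.lift_of_apply]
  induction d with
  | zero => rfl
  | succ d ih =>
    rw [iterate_succ_apply', ih, (hcomm.iterate_right d).eq, hstart, iterate_succ_apply,
      FreeGroup.subst_of_self]

theorem not_isEIteratedIdentity_of_injective {G : Type*} [Group G] {ψ : FreeGroup (Fin n) →* G}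
    (hψ : Injective ψ) {w : FreeGroup (Fin n)} (hw : w ≠ 1) : ¬ IsEIteratedIdentity w G := by
  intro hid
  obtain ⟨d, hd, hd1⟩ := hid (ψ ∘ FreeGroup.of)
  rw [Function.comp_apply, ← (semiconj_verbalMap w FreeGroup.of ψ).iterate_right d,
    iterate_verbalMap_of, ← map_one ψ] at hd1
  exact FreeGroup.iterate_subst_of_self_ne_one hw (by omega) (hψ hd1)

end VerbalMap

/-- A group containing a non-abelian free subgroup satisfies no non-trivial E-type
iterated identity. -/
theorem no_iterated_identity_of_free_subgroup (G : Type*) [Group G]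
    (hfree : ∃ φ : FreeGroup (Fin 2) →* G, Function.Injective φ) :
    ∀ (n : ℕ) [NeZero n] (w : FreeGroup (Fin n)), w ≠ 1 → ¬ IsEIteratedIdentity w G := by
  obtain ⟨φ, hφ⟩ := hfree
  intro n _ w hw
  obtain ⟨ψ, hψ⟩ := FreeGroup.exists_injective_fin_two (Fin n)
  exact not_isEIteratedIdentity_of_injective (ψ := φ.comp ψ) (hφ.comp hψ) hw
end
end

section
/- Let n ≥ 6, let G = Equiv.Perm (Fin n) be the symmetric group on n letters, and let m be the product of all prime numbers that are ≤ n. In FreeGroup (Fin 4) with free generators x₀, x₁, x₂, x₃, set w₁ = x₁ * x₀^m * x₁⁻¹, w₂ = x₂ * x₀^m * x₂⁻¹, w₃ = x₃ * x₀^m * x₃⁻¹. Then each of w₁, w₂, w₃ is an E-type iterated identity of G, while their product w = w₁ * w₂ * w₃ is not an E-type iterated identity of G. -/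
noncomputable section

/-! The conjugated power `x_i x₀^M x_i⁻¹` acts on `x₀` as `x ↦ c x^M c⁻¹`, whose `d`-th iterate is
`x ↦ c^d x^(M^d) c^(-d)`. In `Sₙ` every prime dividing the order of an element is `≤ n`, hence
divides `m`, so `x^(m^d) = 1` once `d` is the order of `x`. For the product, `m ≡ 2 (mod 4)`
because `m` is even and squarefree; so for an element `σ` of order `4` the verbal map sends `σ` to
`σ² (a σ² a⁻¹) (b σ² b⁻¹)`, and suitable `σ, a, b` in `S₆ ≤ Sₙ` make `σ ≠ 1` a fixed point. -/

open Equiv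

section VerbalMap

variable {k : ℕ} [NeZero k] {G : Type*} [Group G]

def conjPowWord (i : Fin k) (M : ℕ) : FreeGroup (Fin k) :=
  FreeGroup.of i * FreeGroup.of 0 ^ M * (FreeGroup.of i)⁻¹

lemma verbalMap_mul (w v : FreeGroup (Fin k)) (f : Fin k → G) (x : G) :
    verbalMap (w * v) f x = verbalMap w f x * verbalMap v f x :=
  map_mul _ w v

lemma verbalMap_conjPowWord {i : Fin k} (hi : i ≠ 0) (M : ℕ) (f : Fin k → G) (x : G) :
    verbalMap (conjPowWord i M) f x = f i * x ^ M * (f i)⁻¹ := by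
  simp [verbalMap, conjPowWord, Function.update_of_ne hi]

lemma iterate_conj_pow (c x : G) (M d : ℕ) :
    (fun y => c * y ^ M * c⁻¹)^[d] x = c ^ d * x ^ (M ^ d) * (c ^ d)⁻¹ := by
  induction d with
  | zero => simp
  | succ d ih =>
    rw [Function.iterate_succ_apply', ih, conj_pow, ← pow_mul, ← pow_succ]
    group

lemma pow_pow_orderOf_eq_one [Finite G] {M : ℕ} (hM : ∀ p : ℕ, p.Prime → p ∣ Nat.card G → p ∣ M)
    (x : G) : x ^ (M ^ orderOf x) = 1 := by
  rcases eq_or_ne M 0 with rfl | hM₀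
  · simp [(orderOf_pos x).ne']
  refine orderOf_dvd_iff_pow_eq_one.mp <|
    (Nat.dvd_pow_self_iff (orderOf_pos x).ne' hM₀).mpr fun p hp => ?_
  have hp' := Nat.prime_of_mem_primeFactors hp
  exact Nat.mem_primeFactors.mpr
    ⟨hp', hM p hp' ((Nat.dvd_of_mem_primeFactors hp).trans (orderOf_dvd_natCard x)), hM₀⟩

theorem isEIteratedIdentity_conjPowWord [Finite G] {i : Fin k} (hi : i ≠ 0) {M : ℕ}
    (hM : ∀ p : ℕ, p.Prime → p ∣ Nat.card G → p ∣ M) :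
    IsEIteratedIdentity (conjPowWord i M) G := by
  intro f
  refine ⟨orderOf (f 0), orderOf_pos _, ?_⟩
  have hmap : verbalMap (conjPowWord i M) f = fun y => f i * y ^ M * (f i)⁻¹ :=
    funext (verbalMap_conjPowWord hi M f)
  rw [hmap, iterate_conj_pow, pow_pow_orderOf_eq_one hM]
  group

lemma not_isEIteratedIdentity_of_isFixedPt {w : FreeGroup (Fin k)} {f : Fin k → G}
    (hfix : Function.IsFixedPt (verbalMap w f) (f 0)) (hne : f 0 ≠ 1) :
    ¬ IsEIteratedIdentity w G := fun hw => by
  obtain ⟨d, -, hd⟩ := hw f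
  exact hne (hfix.iterate d ▸ hd)

theorem not_isEIteratedIdentity_conjPowWord_mul {M : ℕ} {σ a b : G} (hσ : σ ≠ 1)
    (hfix : σ ^ M * (a * σ ^ M * a⁻¹) * (b * σ ^ M * b⁻¹) = σ) :
    ¬ IsEIteratedIdentity
      (conjPowWord (1 : Fin 4) M * conjPowWord 2 M * conjPowWord 3 M) G := by
  refine not_isEIteratedIdentity_of_isFixedPt (f := ![σ, 1, a, b]) ?_ hσ
  simpa [Function.IsFixedPt, verbalMap_mul, verbalMap_conjPowWord] using hfix

end VerbalMap

lemma primorial_mod_four {n : ℕ} (hn : 2 ≤ n) : primorial n % 4 = 2 := by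
  have h2 : 2 ∣ primorial n := Nat.prime_two.dvd_primorial_iff.mpr hn
  have h4 : ¬ 4 ∣ primorial n := fun h =>
    absurd (Nat.isUnit_iff.mp (squarefree_primorial n 2 h)) (by decide)
  omega

lemma prime_dvd_card_perm_fin {n p : ℕ} (hp : p.Prime) (h : p ∣ Nat.card (Perm (Fin n))) :
    p ∣ primorial n := by
  rw [Nat.card_perm, Nat.card_eq_fintype_card, Fintype.card_fin] at h
  exact hp.dvd_primorial_iff.mpr (hp.dvd_factorial.mp h)

set_option maxRecDepth 10000 in
/-- `σ` is a `4`-cycle times a disjoint transposition, so `σ²` is a product of two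
transpositions. -/
lemma exists_perm_fin_six : ∃ σ a b : Perm (Fin 6), σ ^ 4 = 1 ∧ σ ≠ 1 ∧
    σ ^ 2 * (a * σ ^ 2 * a⁻¹) * (b * σ ^ 2 * b⁻¹) = σ := by
  refine ⟨swap 0 1 * swap 1 2 * swap 2 3 * swap 4 5, swap 2 3,
    swap 0 1 * swap 1 4 * (swap 2 3 * swap 3 5), ?_, ?_, ?_⟩ <;> decide

lemma exists_perm_fixed_of_mod_four {n M : ℕ} (hn : 6 ≤ n) (hM : M % 4 = 2) :
    ∃ σ a b : Perm (Fin n), σ ≠ 1 ∧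
      σ ^ M * (a * σ ^ M * a⁻¹) * (b * σ ^ M * b⁻¹) = σ := by
  obtain ⟨σ, a, b, h4, hne, hfix⟩ := exists_perm_fin_six
  let ι := Perm.viaEmbeddingHom (Fin.castLEEmb hn)
  have hM2 : σ ^ M = σ ^ 2 := by rw [pow_eq_pow_mod M h4, hM]
  refine ⟨ι σ, ι a, ι b, (map_ne_one_iff ι (Perm.viaEmbeddingHom_injective _)).mpr hne, ?_⟩
  simp only [← map_pow, ← map_inv, ← map_mul, hM2, hfix]

/-- In the symmetric group `S_n` (`n ≥ 6`), with `m` the product of all primes `≤ n`, the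
words `w₁ = x₁ x₀^m x₁⁻¹`, `w₂ = x₂ x₀^m x₂⁻¹`, `w₃ = x₃ x₀^m x₃⁻¹` are E-type iterated
identities, but their product `w₁ w₂ w₃` is not. -/
theorem symmetric_group_product_not_iterated_identity (n : ℕ) (hn : 6 ≤ n)
    (m : ℕ) (hm : m = ∏ p ∈ (Finset.range (n + 1)).filter Nat.Prime, p)
    (w₁ w₂ w₃ : FreeGroup (Fin 4))
    (h₁ : w₁ = FreeGroup.of 1 * (FreeGroup.of 0) ^ m * (FreeGroup.of 1)⁻¹)
    (h₂ : w₂ = FreeGroup.of 2 * (FreeGroup.of 0) ^ m * (FreeGroup.of 2)⁻¹)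
    (h₃ : w₃ = FreeGroup.of 3 * (FreeGroup.of 0) ^ m * (FreeGroup.of 3)⁻¹) :
    IsEIteratedIdentity w₁ (Equiv.Perm (Fin n)) ∧
    IsEIteratedIdentity w₂ (Equiv.Perm (Fin n)) ∧
    IsEIteratedIdentity w₃ (Equiv.Perm (Fin n)) ∧
    ¬ IsEIteratedIdentity (w₁ * w₂ * w₃) (Equiv.Perm (Fin n)) := by
  replace hm : m = primorial n := hm
  subst hm h₁ h₂ h₃
  have hM : ∀ p : ℕ, p.Prime → p ∣ Nat.card (Perm (Fin n)) → p ∣ primorial n :=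
    fun _ => prime_dvd_card_perm_fin
  obtain ⟨σ, a, b, hσ, hfix⟩ :=
    exists_perm_fixed_of_mod_four hn (primorial_mod_four (n := n) (by omega))
  exact ⟨isEIteratedIdentity_conjPowWord (by decide) hM,
    isEIteratedIdentity_conjPowWord (by decide) hM,
    isEIteratedIdentity_conjPowWord (by decide) hM,
    not_isEIteratedIdentity_conjPowWord_mul hσ hfix⟩
end
end

section
/- Let G be an abelian group containing an element of infinite order (there exists g ∈ G with ¬ IsOfFinOrder g). Then every E-type iterated identity of G is already an identity of G: if n ≥ 1 and w ∈ FreeGroup (Fin n) is an E-type iterated identity of G, then FreeGroup.lift f w = 1 for every f : Fin n → G. In particular G has iterational depth at most 1 with respect to every E-type iterated identity it satisfies. -/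
noncomputable section

/-- The exponent-sum of the variable `0` in a word. -/
def expSum0 (n : ℕ) [NeZero n] : FreeGroup (Fin n) →* Multiplicative ℤ :=
  FreeGroup.lift (fun j => Multiplicative.ofAdd (if j = 0 then (1 : ℤ) else 0))

/-- Key decomposition in a commutative group. -/
lemma lift_update_eq {n : ℕ} [NeZero n] {G : Type*} [CommGroup G]
    (w : FreeGroup (Fin n)) (f : Fin n → G) (x : G) :
    FreeGroup.lift (Function.update f 0 x) w
      = x ^ (Multiplicative.toAdd (expSum0 n w))
        * FreeGroup.lift (Function.update f 0 1) w := by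
  have h : FreeGroup.lift (Function.update f 0 x)
      = ((zpowersHom G x).comp (expSum0 n)) * FreeGroup.lift (Function.update f 0 1) := by
    apply FreeGroup.ext_hom
    intro j
    by_cases hj : j = 0 <;>
      simp [expSum0, hj, Function.update_apply]
  rw [h]
  rfl

lemma iterate_zpow {G : Type*} [CommGroup G] (e : ℤ) (g : G) (d : ℕ) :
    (fun x : G => x ^ e)^[d] g = g ^ (e ^ d) := by
  induction d with
  | zero => simp
  | succ k ih =>
      rw [Function.iterate_succ_apply', ih, ← zpow_mul, ← pow_succ]

/-- In an abelian group with an element of infinite order, every E-type iterated identity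
is an identity; in particular the iterational depth with respect to it is at most `1`. -/
theorem abelian_iterated_identity_is_identity (G : Type*) [CommGroup G]
    (hinf : ∃ g : G, ¬ IsOfFinOrder g)
    (n : ℕ) [NeZero n] (w : FreeGroup (Fin n)) (hw : IsEIteratedIdentity w G) :
    (∀ f : Fin n → G, FreeGroup.lift f w = 1) ∧ DepthAtMost w G 1 := by
  obtain ⟨g, hg⟩ := hinf
  set e : ℤ := Multiplicative.toAdd (expSum0 n w) with he
  -- Step 1 : e = 0
  have he0 : e = 0 := by
    set f : Fin n → G := fun i => if i = 0 then g else 1 with hf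
    obtain ⟨d, hd1, hd⟩ := hw f
    have hupd : Function.update f 0 (1 : G) = fun _ => 1 := by
      funext i
      by_cases hi : i = 0 <;> simp [hf, Function.update_apply, hi]
    have hconst : FreeGroup.lift (Function.update f 0 (1 : G)) w = 1 := by
      rw [hupd]
      have : (FreeGroup.lift (fun _ : Fin n => (1 : G))) = 1 := by
        apply FreeGroup.ext_hom; intro j; simp
      rw [this]; rfl
    have hmap : verbalMap w f = fun x => x ^ e := by
      funext x
      rw [verbalMap, lift_update_eq, hconst, mul_one]
    have hf0 : f 0 = g := by simp [hf]
    rw [hmap, hf0, iterate_zpow] at hd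
    have hed : e ^ d = 0 := by
      by_contra hne
      exact hg (isOfFinOrder_iff_zpow_eq_one.mpr ⟨e ^ d, hne, hd⟩)
    exact pow_eq_zero_iff (Nat.one_le_iff_ne_zero.mp hd1) |>.mp hed
  -- Step 2 : every "constant" is 1
  have hc : ∀ f : Fin n → G, FreeGroup.lift (Function.update f 0 (1 : G)) w = 1 := by
    intro f
    obtain ⟨d, hd1, hd⟩ := hw f
    have hmap : verbalMap w f = fun _ => FreeGroup.lift (Function.update f 0 (1 : G)) w := by
      funext x
      rw [verbalMap, lift_update_eq, ← he, he0, zpow_zero, one_mul]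
    obtain ⟨k, rfl⟩ := Nat.exists_eq_add_of_le hd1
    rw [add_comm, Function.iterate_succ_apply', hmap] at hd
    exact hd
  have hid : ∀ f : Fin n → G, FreeGroup.lift f w = 1 := by
    intro f
    have h1 : FreeGroup.lift (Function.update f 0 (f 0)) w = 1 := by
      rw [lift_update_eq, ← he, he0, zpow_zero, one_mul, hc f]
    rwa [Function.update_eq_self] at h1
  refine ⟨hid, ?_⟩
  intro f
  refine ⟨1, le_refl 1, le_refl 1, ?_⟩
  simp only [Function.iterate_one, verbalMap]
  exact hid _
end
end

section
/- Let G be a nilpotent group (Group.IsNilpotent G) containing an element of infinite order (there exists g ∈ G with ¬ IsOfFinOrder g). Let n ≥ 1 and w ∈ FreeGroup (Fin n). Then w is an E-type iterated identity of G if and only if both of the following hold: (1) the exponent sum of the variable x₀ in w equals 0 (the homomorphism FreeGroup (Fin n) →* Multiplicative ℤ sending x₀ to Multiplicative.ofAdd 1 and x_j to 1 for j ≠ 0 maps w to 1), and (2) the word obtained from w by setting x₀ = 1 is an identity of G, i.e., FreeGroup.lift f w = 1 for every f : Fin n → G with f 0 = 1. -/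
noncomputable section

/-!
For central `x`, evaluating `w` at `x₀ = x` gives `x ^ e * w(x₀ = 1)`, where `e` is the exponent
sum of `x₀`. With all other variables trivial the verbal map is `x ↦ x ^ e`, so an element of
infinite order forces `e = 0`. Once `e = 0`, the verbal map is constant, equal to `w(x₀ = 1)`,
on each term `γ k` of the lower central series modulo the next term `γ (k + 1)`. If `w(x₀ = 1)`
is an identity, every orbit therefore descends the lower central series and reaches `γ c = 1`.
Conversely, if `f 0 = 1` and `v = w(f) ∈ γ k`, the orbit of `f 0` stays in the coset
`v γ (k + 1)`, so it can only reach `1` if `v ∈ γ (k + 1)`; by induction `v = 1`.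
-/

open Function Subgroup

theorem MonoidHom.map_freeGroupLift {α H K : Type*} [Group H] [Group K] (φ : H →* K)
    (f : α → H) (w : FreeGroup α) :
    φ (FreeGroup.lift f w) = FreeGroup.lift (φ ∘ f) w :=
  FreeGroup.lift_unique (f := φ ∘ f) (φ.comp (FreeGroup.lift f)) (by simp)

section ExponentSum

variable {n : ℕ} {H : Type*} [Group H]

theorem lift_mulSingle (i : Fin n) (x : H) :
    FreeGroup.lift (Pi.mulSingle i x) = (zpowersHom H x).comp (expSumHom i) :=
  FreeGroup.ext_hom _ _ fun j => by
    by_cases hj : j = i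
    · subst hj; simp [expSumHom]
    · simp [expSumHom, hj]

theorem lift_update_of_mem_center (f : Fin n → H) (i : Fin n) {x : H} (hx : x ∈ center H)
    (w : FreeGroup (Fin n)) :
    FreeGroup.lift (update f i x) w =
      x ^ (expSumHom i w).toAdd * FreeGroup.lift (update f i 1) w := by
  have hcomm : ∀ (m : ℤ) (g : H), Commute g (x ^ m) := fun m g =>
    Commute.zpow_right (mem_center_iff.mp hx g) m
  induction w using FreeGroup.induction_on with
  | C1 => simp
  | of j =>
    by_cases hj : j = i
    · subst hj; simp [expSumHom]
    · simp [expSumHom, hj]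
  | inv_of j _ =>
    by_cases hj : j = i
    · subst hj; simp [expSumHom]
    · simp [expSumHom, hj]
  | mul a b ha hb =>
    simp only [map_mul, ha, hb, toAdd_mul, zpow_add]
    rw [mul_assoc, (hcomm _ _).left_comm, ← mul_assoc, ← mul_assoc]

end ExponentSum

section VerbalMap

variable {G : Type*} [Group G] {n : ℕ} [NeZero n] (w : FreeGroup (Fin n))

theorem verbalMap_apply_self (f : Fin n → G) : verbalMap w f (f 0) = FreeGroup.lift f w := by
  rw [verbalMap, update_eq_self]

theorem verbalMap_mulSingle (g x : G) :
    verbalMap w (Pi.mulSingle 0 g) x = x ^ (expSumHom 0 w).toAdd := by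
  rw [verbalMap, Pi.mulSingle, update_idem, ← Pi.mulSingle, lift_mulSingle]
  rfl

theorem expSumHom_eq_one_of_isEIteratedIdentity (hE : IsEIteratedIdentity w G) {g : G}
    (hg : ¬IsOfFinOrder g) : expSumHom 0 w = 1 := by
  obtain ⟨d, hd, hgd⟩ := hE (Pi.mulSingle 0 g)
  rw [funext (verbalMap_mulSingle w g), zpow_iterate, Pi.mulSingle_eq_same, ← zpow_zero g]
    at hgd
  have hpow := injective_zpow_iff_not_isOfFinOrder.mpr hg hgd
  rw [pow_eq_zero_iff (by omega)] at hpow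
  rw [← ofAdd_toAdd (expSumHom 0 w), hpow, ofAdd_zero]

theorem map_verbalMap_of_mem_center {Q : Type*} [Group Q] (π : G →* Q)
    (hw : expSumHom 0 w = 1) (f : Fin n → G) {x : G} (hx : π x ∈ center Q) :
    π (verbalMap w f x) = π (verbalMap w f 1) := by
  simp only [verbalMap, π.map_freeGroupLift, comp_update, map_one]
  rw [lift_update_of_mem_center _ _ hx, hw, toAdd_one, zpow_zero, one_mul]

end VerbalMap

theorem mk_mem_center_of_mem_lowerCentralSeries {G : Type*} [Group G] {k : ℕ} {x : G}
    (hx : x ∈ (⊤ : Subgroup G).lowerCentralSeries k) :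
    (x : G ⧸ (⊤ : Subgroup G).lowerCentralSeries (k + 1)) ∈ center _ := by
  refine mem_center_iff.mpr fun y => ?_
  induction y using QuotientGroup.induction_on with
  | H z =>
    refine (commutatorElement_eq_one_iff_mul_comm.mp ?_).symm
    rw [← QuotientGroup.mk'_apply, ← QuotientGroup.mk'_apply, ← map_commutatorElement,
      QuotientGroup.mk'_apply, QuotientGroup.eq_one_iff]
    exact commutator_mem_commutator hx (mem_top z)

section Nilpotent

variable {G : Type*} [Group G] {n : ℕ} [NeZero n] (w : FreeGroup (Fin n))

theorem verbalMap_mem_lowerCentralSeries_succ (hw : expSumHom 0 w = 1)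
    (hid : ∀ f : Fin n → G, f 0 = 1 → FreeGroup.lift f w = 1) (f : Fin n → G)
    {k : ℕ} {x : G} (hx : x ∈ (⊤ : Subgroup G).lowerCentralSeries k) :
    verbalMap w f x ∈ (⊤ : Subgroup G).lowerCentralSeries (k + 1) := by
  rw [← QuotientGroup.eq_one_iff, ← QuotientGroup.mk'_apply,
    map_verbalMap_of_mem_center w _ hw f (mk_mem_center_of_mem_lowerCentralSeries hx),
    verbalMap, hid _ (update_self _ _ _), map_one]

theorem iterate_verbalMap_mem_lowerCentralSeries (hw : expSumHom 0 w = 1)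
    (hid : ∀ f : Fin n → G, f 0 = 1 → FreeGroup.lift f w = 1) (f : Fin n → G) (x : G) :
    ∀ d, (verbalMap w f)^[d] x ∈ (⊤ : Subgroup G).lowerCentralSeries d
  | 0 => mem_top x
  | d + 1 => by
    rw [iterate_succ_apply']
    exact verbalMap_mem_lowerCentralSeries_succ w hw hid f
      (iterate_verbalMap_mem_lowerCentralSeries hw hid f x d)

theorem isEIteratedIdentity_of_lowerCentralSeries_eq_bot {c : ℕ}
    (hc : (⊤ : Subgroup G).lowerCentralSeries c = ⊥) (hw : expSumHom 0 w = 1)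
    (hid : ∀ f : Fin n → G, f 0 = 1 → FreeGroup.lift f w = 1) : IsEIteratedIdentity w G :=
  fun f => ⟨c + 1, le_add_self, by
    have h := (⊤ : Subgroup G).lowerCentralSeries_antitone c.le_succ
      (iterate_verbalMap_mem_lowerCentralSeries w hw hid f (f 0) (c + 1))
    rwa [hc, mem_bot] at h⟩

theorem lift_mem_lowerCentralSeries_of_isEIteratedIdentity (hE : IsEIteratedIdentity w G)
    (hw : expSumHom 0 w = 1) (f : Fin n → G) (hf : f 0 = 1) :
    ∀ k, FreeGroup.lift f w ∈ (⊤ : Subgroup G).lowerCentralSeries k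
  | 0 => mem_top _
  | k + 1 => by
    set π := QuotientGroup.mk' ((⊤ : Subgroup G).lowerCentralSeries (k + 1))
    have hv := lift_mem_lowerCentralSeries_of_isEIteratedIdentity hE hw f hf k
    have hmaps : Set.MapsTo (verbalMap w f) {x | π x = π (FreeGroup.lift f w)}
        {x | π x = π (FreeGroup.lift f w)} := fun x hx => by
      have hcen : π x ∈ center _ := by
        rw [hx]; exact mk_mem_center_of_mem_lowerCentralSeries hv
      rw [Set.mem_ofPred_eq, map_verbalMap_of_mem_center w π hw f hcen, ← hf,
        verbalMap_apply_self]
    obtain ⟨d, hd, hfix⟩ := hE f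
    obtain ⟨e, rfl⟩ := Nat.exists_eq_add_of_le' hd
    have h := hmaps.iterate e (show verbalMap w f (f 0) ∈ _ by
      rw [Set.mem_ofPred_eq, verbalMap_apply_self])
    rw [Set.mem_ofPred_eq, ← iterate_succ_apply, hfix, map_one, eq_comm,
      QuotientGroup.mk'_apply, QuotientGroup.eq_one_iff] at h
    exact h

end Nilpotent

/-- For a nilpotent group with an element of infinite order, `w` is an E-type iterated
identity iff the exponent sum of `x₀` in `w` is `0` and the word obtained from `w` by
setting `x₀ = 1` is an identity of the group. -/
theorem nilpotent_iterated_identity_iff (G : Type*) [Group G] [Group.IsNilpotent G]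
    (hinf : ∃ g : G, ¬ IsOfFinOrder g)
    (n : ℕ) [NeZero n] (w : FreeGroup (Fin n)) :
    IsEIteratedIdentity w G ↔
      (expSumHom (0 : Fin n) w = 1 ∧
        ∀ f : Fin n → G, f 0 = 1 → FreeGroup.lift f w = 1) := by
  obtain ⟨c, hc⟩ := Subgroup.nilpotent_iff_lowerCentralSeries.mp ‹Group.IsNilpotent G›
  refine ⟨fun hE => ?_, fun ⟨hw, hid⟩ =>
    isEIteratedIdentity_of_lowerCentralSeries_eq_bot w hc hw hid⟩
  obtain ⟨g, hg⟩ := hinf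
  have hw := expSumHom_eq_one_of_isEIteratedIdentity w hE hg
  refine ⟨hw, fun f hf => ?_⟩
  simpa [hc] using lift_mem_lowerCentralSeries_of_isEIteratedIdentity w hE hw f hf c
end
end

section
/- Let G be a nilpotent group (Group.IsNilpotent G) and n ≥ 1. Then the set Ω = { w ∈ FreeGroup (Fin n) | w is an E-type iterated identity of G } is a normal subgroup of FreeGroup (Fin n): 1 ∈ Ω; if w, w' ∈ Ω then w * w' ∈ Ω; if w ∈ Ω then w⁻¹ ∈ Ω; and if w ∈ Ω and v ∈ FreeGroup (Fin n) then v * w * v⁻¹ ∈ Ω. -/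
noncomputable section

namespace IterAux

open Function Subgroup

variable {n : ℕ} [NeZero n]

/-- The exponent sum of variable `0`, as a homomorphism. -/
def epsHom (n : ℕ) [NeZero n] : FreeGroup (Fin n) →* Multiplicative ℤ :=
  FreeGroup.lift (fun i => Multiplicative.ofAdd (if i = 0 then (1 : ℤ) else 0))

/-- The exponent sum of variable `0` in `w`. -/
def eps (w : FreeGroup (Fin n)) : ℤ := Multiplicative.toAdd (epsHom n w)

lemma eps_mul (w w' : FreeGroup (Fin n)) : eps (w * w') = eps w + eps w' := by
  simp [eps, map_mul]

lemma eps_inv (w : FreeGroup (Fin n)) : eps w⁻¹ = -eps w := by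
  simp [eps]

lemma eps_of (i : Fin n) : eps (FreeGroup.of i) = if i = 0 then (1 : ℤ) else 0 := by
  simp [eps, epsHom]

variable {G : Type*} [Group G]

lemma verbal_eq (w : FreeGroup (Fin n)) (f : Fin n → G) (x : G) :
    verbalMap w f x = FreeGroup.lift (Function.update f 0 x) w := rfl

lemma verbal_update (w : FreeGroup (Fin n)) (f : Fin n → G) (y : G) :
    verbalMap w (Function.update f 0 y) = verbalMap w f := by
  funext x
  simp [verbalMap, Function.update_idem]

lemma verbal_triv (w : FreeGroup (Fin n)) (x : G) :
    verbalMap w (fun _ => (1 : G)) x = x ^ eps w := by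
  have h : FreeGroup.lift (Function.update (fun _ => (1 : G)) 0 x)
      = (zpowersHom G x).comp (epsHom n) := by
    apply FreeGroup.ext_hom
    intro i
    by_cases hi : i = 0 <;>
      simp [hi, epsHom, Function.update_apply, zpowersHom_apply]
  show FreeGroup.lift (Function.update (fun _ => (1 : G)) 0 x) w = x ^ eps w
  rw [h]
  rfl

lemma verbal_map {H : Type*} [Group H] (π : G →* H) (w : FreeGroup (Fin n))
    (f : Fin n → G) (x : G) :
    π (verbalMap w f x) = verbalMap w (⇑π ∘ f) (π x) := by
  have h : π.comp (FreeGroup.lift (Function.update f 0 x))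
      = FreeGroup.lift (Function.update (⇑π ∘ f) 0 (π x)) := by
    apply FreeGroup.ext_hom
    intro i
    by_cases hi : i = 0 <;> simp [hi, Function.update_apply]
  show π.comp (FreeGroup.lift (Function.update f 0 x)) w = _
  rw [h]
  rfl

lemma verbal_iter_map {H : Type*} [Group H] (π : G →* H) (w : FreeGroup (Fin n))
    (f : Fin n → G) : ∀ (e : ℕ) (x : G),
    π ((verbalMap w f)^[e] x) = (verbalMap w (⇑π ∘ f))^[e] (π x)
  | 0, x => rfl
  | (e+1), x => by
    rw [Function.iterate_succ_apply, Function.iterate_succ_apply,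
      verbal_iter_map π w f e (verbalMap w f x), verbal_map]

lemma verbal_central (w : FreeGroup (Fin n)) (f : Fin n → G) (u z : G)
    (hz : z ∈ Subgroup.center G) :
    verbalMap w f (u * z) = verbalMap w f u * z ^ eps w := by
  have hzc : ∀ (m : ℤ) (g : G), Commute g (z ^ m) := fun m g =>
    (Subgroup.mem_center_iff.mp (Subgroup.zpow_mem _ hz m) g)
  let N : FreeGroup (Fin n) →* G :=
    { toFun := fun v => FreeGroup.lift (Function.update f 0 u) v * z ^ eps v
      map_one' := by simp [eps]
      map_mul' := by
        intro v v'
        simp only [map_mul, eps_mul, zpow_add]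
        exact (hzc (eps v) (FreeGroup.lift (Function.update f 0 u) v')).mul_mul_mul_comm _ _ }
  have h : FreeGroup.lift (Function.update f 0 (u * z)) = N := by
    apply FreeGroup.ext_hom
    intro i
    have hN : N (FreeGroup.of i)
        = FreeGroup.lift (Function.update f 0 u) (FreeGroup.of i) * z ^ eps (FreeGroup.of i) := rfl
    rw [hN, FreeGroup.lift_apply_of, FreeGroup.lift_apply_of, eps_of]
    by_cases hi : i = 0 <;> simp [hi, Function.update_apply]
  show FreeGroup.lift (Function.update f 0 (u * z)) w = _
  rw [h]
  rfl

lemma verbal_iter_central (w : FreeGroup (Fin n)) (f : Fin n → G) :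
    ∀ (e : ℕ) (u z : G), z ∈ Subgroup.center G →
    (verbalMap w f)^[e] (u * z) = (verbalMap w f)^[e] u * z ^ (eps w ^ e)
  | 0, u, z, hz => by simp
  | (e+1), u, z, hz => by
    rw [Function.iterate_succ_apply, Function.iterate_succ_apply,
      verbal_central w f u z hz,
      verbal_iter_central w f e (verbalMap w f u) (z ^ eps w) (Subgroup.zpow_mem _ hz _),
      ← zpow_mul, ← pow_succ']

/-- Partial geometric sums `1 + k + ... + k^(e-1)`. -/
def sgeo (k : ℤ) : ℕ → ℤ
  | 0 => 0
  | e + 1 => k * sgeo k e + 1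

lemma sgeo_zero (k : ℤ) : sgeo k 0 = 0 := rfl

lemma sgeo_succ (k : ℤ) (e : ℕ) : sgeo k (e + 1) = k * sgeo k e + 1 := rfl

lemma sgeo_add (k : ℤ) (p : ℕ) : ∀ q : ℕ, sgeo k (p + q) = sgeo k p * k ^ q + sgeo k q
  | 0 => by simp [sgeo_zero]
  | q + 1 => by
    have h : p + (q + 1) = (p + q) + 1 := by omega
    rw [h, sgeo_succ, sgeo_succ, sgeo_add k p q, pow_succ]
    ring

lemma sgeo_sub_one (k : ℤ) : ∀ E : ℕ, (k - 1) * sgeo k E = k ^ E - 1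
  | 0 => by simp [sgeo_zero]
  | E + 1 => by
    have h := sgeo_sub_one k E
    rw [sgeo_succ, pow_succ]
    ring_nf
    ring_nf at h
    linear_combination k * h

lemma verbal_iter_one (w : FreeGroup (Fin n)) (f : Fin n → G)
    (hcen : verbalMap w f 1 ∈ Subgroup.center G) :
    ∀ e : ℕ, (verbalMap w f)^[e] 1 = (verbalMap w f 1) ^ sgeo (eps w) e
  | 0 => by simp [sgeo_zero]
  | e + 1 => by
    rw [Function.iterate_succ_apply', verbal_iter_one w f hcen e,
      show (verbalMap w f 1) ^ sgeo (eps w) e = 1 * (verbalMap w f 1) ^ sgeo (eps w) e from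
        (one_mul _).symm,
      verbal_central w f 1 _ (Subgroup.zpow_mem _ hcen _), ← zpow_mul, sgeo_succ,
      show eps w * sgeo (eps w) e + 1 = 1 + sgeo (eps w) e * eps w by ring,
      zpow_add, zpow_one]

lemma omega_quotient {H : Type*} [Group H] (π : G →* H) (hs : Function.Surjective π)
    (w : FreeGroup (Fin n)) (h : IsEIteratedIdentity w G) : IsEIteratedIdentity w H := by
  intro fbar
  have hpf : ⇑π ∘ (fun i => Function.surjInv hs (fbar i)) = fbar := by
    funext i
    exact Function.surjInv_eq hs _
  obtain ⟨d, hd1, hd⟩ := h (fun i => Function.surjInv hs (fbar i))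
  refine ⟨d, hd1, ?_⟩
  rw [← hpf]
  show (verbalMap w (⇑π ∘ _))^[d] (π _) = 1
  rw [← verbal_iter_map, hd, map_one]

lemma pow_iter (k : ℤ) : ∀ (d : ℕ) (x : G), (fun y : G => y ^ k)^[d] x = x ^ k ^ d
  | 0, x => by simp
  | d + 1, x => by
    rw [Function.iterate_succ_apply', pow_iter k d x, ← zpow_mul, ← pow_succ]

/-- Condition (i): torsion controlled by powers of the exponent sum. -/
lemma condI_of_omega (w : FreeGroup (Fin n)) (h : IsEIteratedIdentity w G) (x : G) :
    ∃ d : ℕ, 1 ≤ d ∧ x ^ eps w ^ d = 1 := by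
  obtain ⟨d, hd1, hd⟩ := h (Function.update (fun _ => (1 : G)) 0 x)
  refine ⟨d, hd1, ?_⟩
  rw [verbal_update, Function.update_self] at hd
  have hv : verbalMap w (fun _ => (1 : G)) = fun y : G => y ^ eps w :=
    funext fun y => verbal_triv w y
  rw [hv, pow_iter] at hd
  exact hd

/-- Condition (ii) holds for nilpotent groups: the word with variable 0 killed
is an identity. -/
lemma condII_of_omega (G : Type*) [Group G] [Group.IsNilpotent G] :
    ∀ w : FreeGroup (Fin n), IsEIteratedIdentity w G →
      ∀ f : Fin n → G, verbalMap w f 1 = 1 := by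
  refine @nilpotent_center_quotient_ind
    (fun G _ _ => ∀ w : FreeGroup (Fin n), IsEIteratedIdentity w G →
      ∀ f : Fin n → G, verbalMap w f 1 = 1) G _ _ ?_ ?_
  · intro G _ _ w _ f
    exact Subsingleton.elim _ _
  · intro G _ _ IH w hw f
    -- a := verbalMap w f 1 is central
    have hπ : Function.Surjective (QuotientGroup.mk' (Subgroup.center G)) :=
      QuotientGroup.mk'_surjective _
    have hwQ := omega_quotient _ hπ w hw
    have hcen : verbalMap w f 1 ∈ Subgroup.center G := by
      have h1 := verbal_map (QuotientGroup.mk' (Subgroup.center G)) w f (1 : G)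
      rw [map_one] at h1
      have h2 := IH w hwQ (⇑(QuotientGroup.mk' (Subgroup.center G)) ∘ f)
      rw [← h1] at h2
      exact (QuotientGroup.eq_one_iff _).mp h2
    -- E with a ^ (eps w) ^ E = 1
    obtain ⟨E, hE1, hE⟩ := condI_of_omega w hw (verbalMap w f 1)
    -- d0 with φ^[d0] 1 = 1
    obtain ⟨d0, hd01, hd0⟩ := hw (Function.update f 0 1)
    rw [verbal_update, Function.update_self] at hd0
    have hmul : ∀ m : ℕ, (verbalMap w f)^[m * d0] 1 = 1 := by
      intro m
      induction m with
      | zero => simp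
      | succ m ih => rw [Nat.succ_mul, Function.iterate_add_apply, hd0, ih]
    have h1 : verbalMap w f 1 ^ sgeo (eps w) (E * d0) = 1 := by
      rw [← verbal_iter_one w f hcen]
      exact hmul E
    have hle : E ≤ E * d0 := Nat.le_mul_of_pos_right E (by omega)
    have hsplit : E * d0 = (E * d0 - E) + E := by omega
    rw [hsplit, sgeo_add, zpow_add, mul_comm (sgeo (eps w) (E * d0 - E)) ((eps w) ^ E),
      zpow_mul, hE, one_zpow, one_mul] at h1
    -- h1 : a ^ sgeo (eps w) E = 1 ; conclude a = 1
    have h2 : verbalMap w f 1 ^ ((eps w) ^ E - 1) = 1 := by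
      rw [← sgeo_sub_one (eps w) E, mul_comm, zpow_mul, h1, one_zpow]
    have h3 : verbalMap w f 1
        = verbalMap w f 1 ^ (eps w) ^ E * (verbalMap w f 1 ^ ((eps w) ^ E - 1))⁻¹ := by
      rw [← zpow_neg, ← zpow_add,
        show (eps w) ^ E + -((eps w) ^ E - 1) = 1 by ring, zpow_one]
    rw [h3, hE, h2, inv_one, one_mul]

/-- Conditions (i) and (ii) are sufficient for nilpotent groups. -/
lemma omega_of_conds (G : Type*) [Group G] [Group.IsNilpotent G] :
    ∀ w : FreeGroup (Fin n),
      (∀ x : G, ∃ d : ℕ, 1 ≤ d ∧ x ^ eps w ^ d = 1) →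
      (∀ f : Fin n → G, verbalMap w f 1 = 1) →
      IsEIteratedIdentity w G := by
  refine @nilpotent_center_quotient_ind
    (fun G _ _ => ∀ w : FreeGroup (Fin n),
      (∀ x : G, ∃ d : ℕ, 1 ≤ d ∧ x ^ eps w ^ d = 1) →
      (∀ f : Fin n → G, verbalMap w f 1 = 1) →
      IsEIteratedIdentity w G) G _ _ ?_ ?_
  · intro G _ _ w _ _ f
    exact ⟨1, le_refl 1, Subsingleton.elim _ _⟩
  · intro G _ _ IH w hi hii f
    have hπ : Function.Surjective (QuotientGroup.mk' (Subgroup.center G)) :=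
      QuotientGroup.mk'_surjective _
    -- conditions descend to the quotient
    have hiQ : ∀ x : G ⧸ Subgroup.center G, ∃ d : ℕ, 1 ≤ d ∧ x ^ eps w ^ d = 1 := by
      intro xq
      obtain ⟨x, rfl⟩ := hπ xq
      obtain ⟨d, hd1, hd⟩ := hi x
      exact ⟨d, hd1, by rw [← map_zpow, hd, map_one]⟩
    have hiiQ : ∀ fq : Fin n → G ⧸ Subgroup.center G, verbalMap w fq 1 = 1 := by
      intro fq
      have hpf : ⇑(QuotientGroup.mk' (Subgroup.center G)) ∘
          (fun i => Function.surjInv hπ (fq i)) = fq := by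
        funext i
        exact Function.surjInv_eq hπ _
      have h1 := verbal_map (QuotientGroup.mk' (Subgroup.center G)) w
        (fun i => Function.surjInv hπ (fq i)) (1 : G)
      rw [map_one] at h1
      rw [← hpf, ← h1, hii, map_one]
    have hwQ := IH w hiQ hiiQ
    obtain ⟨d, hd1, hd⟩ := hwQ (⇑(QuotientGroup.mk' (Subgroup.center G)) ∘ f)
    have hz : (verbalMap w f)^[d] (f 0) ∈ Subgroup.center G := by
      have h1 := verbal_iter_map (QuotientGroup.mk' (Subgroup.center G)) w f d (f 0)
      simp only [Function.comp_apply] at hd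
      rw [hd] at h1
      exact (QuotientGroup.eq_one_iff _).mp h1
    obtain ⟨e, he1, he⟩ := hi ((verbalMap w f)^[d] (f 0))
    refine ⟨e + d, by omega, ?_⟩
    rw [Function.iterate_add_apply]
    have hone : ∀ m : ℕ, (verbalMap w f)^[m] 1 = 1 := by
      intro m
      induction m with
      | zero => rfl
      | succ m ih => rw [Function.iterate_succ_apply', ih, hii f]
    calc (verbalMap w f)^[e] ((verbalMap w f)^[d] (f 0))
        = (verbalMap w f)^[e] (1 * (verbalMap w f)^[d] (f 0)) := by rw [one_mul]
      _ = (verbalMap w f)^[e] 1 * ((verbalMap w f)^[d] (f 0)) ^ eps w ^ e :=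
          verbal_iter_central w f e 1 _ hz
      _ = 1 := by rw [hone, one_mul, he]

lemma int_dvd_add_pow {r k k' : ℤ} {d d' : ℕ} (h : r ∣ k ^ d) (h' : r ∣ k' ^ d') :
    r ∣ (k + k') ^ (d + d') := by
  rw [add_pow]
  apply Finset.dvd_sum
  intro i hi
  rcases le_or_gt d i with hdi | hdi
  · exact Dvd.dvd.mul_right (Dvd.dvd.mul_right (h.trans (pow_dvd_pow k hdi)) _) _
  · have hi' : i < d + d' + 1 := Finset.mem_range.mp hi
    refine Dvd.dvd.mul_right (Dvd.dvd.mul_left (h'.trans (pow_dvd_pow k' ?_)) _) _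
    omega

end IterAux

/-- For a nilpotent group `G`, the set of E-type iterated identities of `G` on `n` variables
is a normal subgroup of the free group `F_n`. -/
theorem nilpotent_iterated_identities_normal_subgroup (G : Type*) [Group G]
    [Group.IsNilpotent G] (n : ℕ) [NeZero n] :
    IsEIteratedIdentity (1 : FreeGroup (Fin n)) G ∧
    (∀ w w' : FreeGroup (Fin n),
      IsEIteratedIdentity w G → IsEIteratedIdentity w' G → IsEIteratedIdentity (w * w') G) ∧
    (∀ w : FreeGroup (Fin n), IsEIteratedIdentity w G → IsEIteratedIdentity w⁻¹ G) ∧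
    (∀ w v : FreeGroup (Fin n),
      IsEIteratedIdentity w G → IsEIteratedIdentity (v * w * v⁻¹) G) := by
  open IterAux in
  refine ⟨?_, ?_, ?_, ?_⟩
  · -- the trivial word
    intro f
    exact ⟨1, le_refl 1, by simp [verbalMap]⟩
  · -- products
    intro w w' hw hw'
    apply IterAux.omega_of_conds G
    · intro x
      obtain ⟨d, hd1, hd⟩ := IterAux.condI_of_omega w hw x
      obtain ⟨d', hd'1, hd'⟩ := IterAux.condI_of_omega w' hw' x
      refine ⟨d + d', by omega, ?_⟩
      rw [IterAux.eps_mul]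
      exact orderOf_dvd_iff_zpow_eq_one.mp
        (IterAux.int_dvd_add_pow (orderOf_dvd_iff_zpow_eq_one.mpr hd)
          (orderOf_dvd_iff_zpow_eq_one.mpr hd'))
    · intro f
      have hm : verbalMap (w * w') f 1 = verbalMap w f 1 * verbalMap w' f 1 :=
        map_mul (FreeGroup.lift (Function.update f 0 1)) w w'
      rw [hm, IterAux.condII_of_omega G w hw f, IterAux.condII_of_omega G w' hw' f, one_mul]
  · -- inverses
    intro w hw
    apply IterAux.omega_of_conds G
    · intro x
      obtain ⟨d, hd1, hd⟩ := IterAux.condI_of_omega w hw x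
      refine ⟨d, hd1, ?_⟩
      rw [IterAux.eps_inv, neg_pow, mul_comm, zpow_mul, hd, one_zpow]
    · intro f
      have hm : verbalMap w⁻¹ f 1 = (verbalMap w f 1)⁻¹ :=
        map_inv (FreeGroup.lift (Function.update f 0 1)) w
      rw [hm, IterAux.condII_of_omega G w hw f, inv_one]
  · -- conjugates
    intro w v hw
    apply IterAux.omega_of_conds G
    · intro x
      obtain ⟨d, hd1, hd⟩ := IterAux.condI_of_omega w hw x
      refine ⟨d, hd1, ?_⟩
      have heps : IterAux.eps (v * w * v⁻¹) = IterAux.eps w := by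
        rw [IterAux.eps_mul, IterAux.eps_mul, IterAux.eps_inv]
        ring
      rw [heps]
      exact hd
    · intro f
      have hm : verbalMap (v * w * v⁻¹) f 1
          = verbalMap v f 1 * verbalMap w f 1 * (verbalMap v f 1)⁻¹ := by
        show FreeGroup.lift (Function.update f 0 1) (v * w * v⁻¹) = _
        rw [map_mul, map_mul, map_inv]
        rfl
      rw [hm, IterAux.condII_of_omega G w hw f, mul_one, mul_inv_cancel]
end
end

section
/- Let G be a group and N a normal subgroup of G that is abelian (all elements of N commute with each other). Let n ≥ 1 and let u ∈ FreeGroup (Fin n) be an element of the normal closure of the generator x₀ (u ∈ Subgroup.normalClosure {FreeGroup.of 0}). Fix f : Fin n → G and define ψ : G → G by ψ(x) = FreeGroup.lift (Function.update f 0 x) u. Then (1) ψ maps N into N: for every x ∈ N, ψ(x) ∈ N; and (2) the restriction of ψ to N is a group homomorphism: for all x, y ∈ N, ψ(x*y) = ψ(x)*ψ(y). -/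
/-!
Write `φ_x` for the evaluation `FreeGroup.lift (Function.update f 0 x)`. Modulo `N` the value
`φ_x w` does not depend on `x ∈ N`, so for a conjugate `c = g x₀ g⁻¹` of the generator we get
`φ_x c = φ_x g · x · (φ_x g)⁻¹ = h x h⁻¹` with `h = φ_1 g` independent of `x ∈ N`: conjugation by
elements congruent modulo the abelian group `N` agrees on `N`. Hence `x ↦ φ_x c` is an endomorphism
of `N`. Endomorphisms of an abelian group are closed under pointwise products and inverses, so the
same holds for every element of the normal closure of `x₀`.
-/

open Function

section Restriction

variable {G F : Type*} [Group G] [Group F]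

def Subgroup.restrictsToEnd (N : Subgroup G) (hN : ∀ x y : G, x ∈ N → y ∈ N → x * y = y * x)
    (φ : G → F →* G) : Subgroup F where
  carrier := {w | (∀ x ∈ N, φ x w ∈ N) ∧ ∀ x ∈ N, ∀ y ∈ N, φ (x * y) w = φ x w * φ y w}
  one_mem' := ⟨fun _ _ => by simp, fun _ _ _ _ => by simp⟩
  mul_mem' := by
    rintro v w ⟨hvN, hv⟩ ⟨hwN, hw⟩
    refine ⟨fun x hx => by simpa using N.mul_mem (hvN x hx) (hwN x hx), fun x hx y hy => ?_⟩
    have hcomm := hN _ _ (hvN y hy) (hwN x hx)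
    simp only [map_mul, hv x hx y hy, hw x hx y hy]
    calc φ x v * φ y v * (φ x w * φ y w)
        = φ x v * (φ y v * φ x w) * φ y w := by group
      _ = φ x v * φ x w * (φ y v * φ y w) := by rw [hcomm]; group
  inv_mem' := by
    rintro w ⟨hwN, hw⟩
    refine ⟨fun x hx => by simpa using N.inv_mem (hwN x hx), fun x hx y hy => ?_⟩
    simp only [map_inv, hw x hx y hy, mul_inv_rev]
    exact hN _ _ (N.inv_mem (hwN y hy)) (N.inv_mem (hwN x hx))

end Restriction

section Group

variable {G : Type*} [Group G] {N : Subgroup G}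

theorem mul_mul_inv_eq_of_inv_mul_mem (hN : ∀ x y : G, x ∈ N → y ∈ N → x * y = y * x)
    {a b x : G} (hab : a⁻¹ * b ∈ N) (hx : x ∈ N) : b * x * b⁻¹ = a * x * a⁻¹ := by
  obtain ⟨c, hc, rfl⟩ : ∃ c ∈ N, b = a * c := ⟨a⁻¹ * b, hab, by group⟩
  calc a * c * x * (a * c)⁻¹ = a * (c * x) * c⁻¹ * a⁻¹ := by group
    _ = a * x * a⁻¹ := by rw [hN c x hc hx]; group

end Group

namespace FreeGroup

variable {α G : Type*} [DecidableEq α] [Group G] (f : α → G) (i : α)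

theorem mk_lift_update_of_mem {N : Subgroup G} [N.Normal] {x : G} (hx : x ∈ N)
    (w : FreeGroup α) :
    (lift (update f i x) w : G ⧸ N) = lift (update f i 1) w := by
  suffices (QuotientGroup.mk' N).comp (lift (update f i x)) =
      (QuotientGroup.mk' N).comp (lift (update f i 1)) from DFunLike.congr_fun this w
  refine ext_hom _ _ fun j => ?_
  rcases eq_or_ne j i with rfl | hj
  · simpa [QuotientGroup.eq_one_iff] using hx
  · simp [hj]

theorem lift_update_conj_of_of_mem {N : Subgroup G} [N.Normal]
    (hN : ∀ x y : G, x ∈ N → y ∈ N → x * y = y * x) {x : G} (hx : x ∈ N) (g : FreeGroup α) :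
    lift (update f i x) (g * of i * g⁻¹) =
      lift (update f i 1) g * x * (lift (update f i 1) g)⁻¹ := by
  simp only [_root_.map_mul, _root_.map_inv, lift_apply_of, update_self]
  refine mul_mul_inv_eq_of_inv_mul_mem hN (QuotientGroup.eq.mp ?_) hx
  exact (mk_lift_update_of_mem f i hx g).symm

theorem normalClosure_of_le_restrictsToEnd {N : Subgroup G} [N.Normal]
    (hN : ∀ x y : G, x ∈ N → y ∈ N → x * y = y * x) :
    Subgroup.normalClosure {of i} ≤
      N.restrictsToEnd hN (fun x => lift (update f i x)) := by
  refine Subgroup.closure_le _ |>.mpr fun c hc => ?_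
  obtain ⟨_, rfl, g, rfl⟩ : ∃ b ∈ ({of i} : Set (FreeGroup α)), ∃ g, g * b * g⁻¹ = c := by
    simpa [Group.mem_conjugatesOfSet_iff, isConj_iff] using hc
  refine ⟨fun x hx => ?_, fun x hx y hy => ?_⟩
  · rw [lift_update_conj_of_of_mem f i hN hx]
    exact Subgroup.Normal.conj_mem inferInstance x hx _
  · rw [lift_update_conj_of_of_mem f i hN hx, lift_update_conj_of_of_mem f i hN hy,
      lift_update_conj_of_of_mem f i hN (N.mul_mem hx hy)]
    group

end FreeGroup

/-- If `N` is an abelian normal subgroup of `G` and `u` lies in the normal closure of the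
generator `x₀`, then for any tuple `f` the verbal map `ψ(x) = u(x, f 1, …, f (n-1))` maps
`N` into `N` and restricts to a group homomorphism on `N`. -/
theorem verbal_map_restriction_homomorphism (G : Type*) [Group G] (N : Subgroup G)
    [N.Normal] (hab : ∀ x y : G, x ∈ N → y ∈ N → x * y = y * x)
    (n : ℕ) [NeZero n] (u : FreeGroup (Fin n))
    (hu : u ∈ Subgroup.normalClosure {FreeGroup.of (0 : Fin n)})
    (f : Fin n → G) :
    (∀ x ∈ N, FreeGroup.lift (Function.update f 0 x) u ∈ N) ∧
    (∀ x ∈ N, ∀ y ∈ N,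
      FreeGroup.lift (Function.update f 0 (x * y)) u =
        FreeGroup.lift (Function.update f 0 x) u *
          FreeGroup.lift (Function.update f 0 y) u) :=
  FreeGroup.normalClosure_of_le_restrictsToEnd f 0 hab hu
end

section
/- Let F be a torsion-free abelian group (an additive commutative group with no ℤ-torsion: for every integer n ≠ 0 and x ∈ F, n • x = 0 implies x = 0) such that the ℚ-vector space ℚ ⊗[ℤ] F is finite-dimensional, and let D = Module.finrank ℚ (ℚ ⊗[ℤ] F). Let ξ : F →+ F be an additive group homomorphism, a ∈ F, and define ρ : F → F by ρ(x) = ξ(x) + a. Suppose that for every x ∈ F there exists k with ρ^[k](x) = 0. Then for every x ∈ F, ρ^[D](x) = 0 and ξ^[D](x) = 0. -/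
open TensorProduct Function

/-!
The orbit of `0` under `ρ = ξ + a` is a cycle, of length `m` say. Since
`ρ^[n] x = ξ^[n] x + ρ^[n] 0`, every `ξ^[m]`-fixed point is `ρ`-periodic, and as its orbit
reaches `0` it lies on the cycle of `0`. Now `a = ρ 0` is `ξ^[m]`-fixed, hence so are all its
multiples; they lie in a finite set, and torsion-freeness forces `a = 0`. Then `ρ = ξ` is
pointwise nilpotent; tensoring with `ℚ` is injective on a torsion-free group, and the kernels of
the powers of the rationalised `ξ` stabilise by the exponent `dim (ℚ ⊗ F)`.
-/

namespace Function.IsPeriodicPt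

variable {α : Type*} {f : α → α} {n : ℕ} {x : α}

theorem finite_range_iterate (hx : IsPeriodicPt f n x) (hn : 0 < n) :
    (Set.range fun k => f^[k] x).Finite :=
  (Set.finite_range fun k : Fin n => f^[k] x).subset <| by
    rintro _ ⟨k, rfl⟩
    exact ⟨⟨k % n, Nat.mod_lt k hn⟩, hx.iterate_mod_apply k⟩

theorem mem_range_iterate_of_iterate_eq {y : α} {k : ℕ} (hx : IsPeriodicPt f n x) (hn : 0 < n)
    (hk : f^[k] x = y) : x ∈ Set.range fun j => f^[j] y := by
  refine ⟨n * k - k, ?_⟩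
  show f^[n * k - k] y = x
  rw [← hk, ← iterate_add_apply, Nat.sub_add_cancel (Nat.le_mul_of_pos_left k hn)]
  exact (hx.mul_const k).eq

end Function.IsPeriodicPt

theorem AddMonoidHom.iterate_add_const_apply {M : Type*} [AddCommMonoid M] (ξ : M →+ M) (a : M)
    (n : ℕ) (x : M) :
    (fun y => ξ y + a)^[n] x = ξ^[n] x + (fun y => ξ y + a)^[n] 0 := by
  induction n with
  | zero => simp
  | succ n ih =>
    simp only [iterate_succ_apply', ih, map_add, add_assoc]

theorem AddMonoidHom.eq_zero_of_forall_exists_iterate_add_const_eq_zero {F : Type*}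
    [AddCommGroup F] [IsAddTorsionFree F] (ξ : F →+ F) (a : F)
    (h : ∀ x, ∃ k, (fun y => ξ y + a)^[k] x = 0) : a = 0 := by
  set ρ : F → F := fun y => ξ y + a
  obtain ⟨k, hk⟩ := h (ρ 0)
  have hpos : 0 < k + 1 := k.succ_pos
  have hper : IsPeriodicPt ρ (k + 1) 0 := by rwa [IsPeriodicPt, IsFixedPt, iterate_succ_apply]
  have hρ : ∀ x, ρ^[k + 1] x = ξ^[k + 1] x := fun x => by
    rw [ξ.iterate_add_const_apply, hper.eq, add_zero]
  have hfix : ξ^[k + 1] a = a := by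
    rw [← hρ]
    simpa [ρ] using hper.apply.eq
  have hmultiples : (AddSubmonoid.multiples a : Set F) ⊆ Set.range fun j => ρ^[j] 0 := by
    rintro _ ⟨j, rfl⟩
    have hcomm : Function.Commute ξ (j • ·) := fun x => map_nsmul ξ j x
    have hja : IsPeriodicPt ρ (k + 1) (j • a) := by
      rw [IsPeriodicPt, IsFixedPt, hρ]
      simp only [(hcomm.iterate_left (k + 1)) a, hfix]
    obtain ⟨l, hl⟩ := h (j • a)
    exact hja.mem_range_iterate_of_iterate_eq hpos hl
  exact (finite_multiples.mp ((hper.finite_range_iterate hpos).subset hmultiples)).eq_zero'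

theorem TensorProduct.one_tmul_injective_of_isFractionRing (R K M : Type*) [CommRing R]
    [CommRing K] [Algebra R K] [IsFractionRing R K] [AddCommGroup M] [Module R M]
    [Module.IsTorsionFree R M] :
    Injective fun x : M => (1 : K) ⊗ₜ[R] x := by
  have : IsLocalizedModule (nonZeroDivisors R) (TensorProduct.mk R K M 1) :=
    (isLocalizedModule_iff_isBaseChange _ K _).mpr (TensorProduct.isBaseChange R M K)
  exact (IsLocalizedModule.injective_iff_isRegular _ (TensorProduct.mk R K M 1)).mpr fun c =>
    (isRegular_iff_mem_nonZeroDivisors.mpr c.2).isSMulRegular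

theorem Module.End.pow_finrank_apply_eq_zero {R K M : Type*} [CommRing R] [Field K] [Algebra R K]
    [IsFractionRing R K] [AddCommGroup M] [Module R M] [Module.IsTorsionFree R M]
    [FiniteDimensional K (K ⊗[R] M)] (f : Module.End R M) {x : M} {k : ℕ} (hx : (f ^ k) x = 0) :
    (f ^ Module.finrank K (K ⊗[R] M)) x = 0 := by
  have hpow (n : ℕ) : (1 : K) ⊗ₜ (f ^ n) x = (f.baseChange K ^ n) (1 ⊗ₜ x) := by
    rw [← LinearMap.baseChange_pow, LinearMap.baseChange_tmul]
  apply TensorProduct.one_tmul_injective_of_isFractionRing R K M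
  simp only [hpow, tmul_zero]
  exact Module.End.ker_pow_le_ker_pow_finrank _ k <| by
    rw [LinearMap.mem_ker, ← hpow, hx, tmul_zero]

/-- Dynamics of an affine recurrent map on a torsion-free abelian group of finite rational
rank `D`: if `ρ(x) = ξ(x) + a` is such that every orbit reaches `0`, then the `D`-th
iterates of `ρ` and of `ξ` are identically `0`. -/
theorem affine_recurrent_map_vanishes (F : Type*) [AddCommGroup F]
    (htf : ∀ m : ℤ, m ≠ 0 → ∀ x : F, m • x = 0 → x = 0)
    [Module.Finite ℚ (ℚ ⊗[ℤ] F)]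
    (ξ : F →+ F) (a : F) (ρ : F → F) (hρ : ∀ x : F, ρ x = ξ x + a)
    (hrec : ∀ x : F, ∃ k : ℕ, ρ^[k] x = 0) :
    ∀ x : F, ρ^[Module.finrank ℚ (ℚ ⊗[ℤ] F)] x = 0 ∧
      (⇑ξ)^[Module.finrank ℚ (ℚ ⊗[ℤ] F)] x = 0 := by
  have : Module.IsTorsionFree ℤ F :=
    .of_smul_eq_zero fun m x h => or_iff_not_imp_left.mpr fun hm => htf m hm x h
  have : IsAddTorsionFree F := .of_isTorsionFree ℤ F
  obtain rfl : ρ = fun x => ξ x + a := funext hρ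
  obtain rfl : a = 0 := ξ.eq_zero_of_forall_exists_iterate_add_const_eq_zero a hrec
  simp only [add_zero] at hrec ⊢
  intro x
  obtain ⟨k, hk⟩ := hrec x
  have hD := Module.End.pow_finrank_apply_eq_zero (K := ℚ) ξ.toIntLinearMap (x := x) (k := k)
  simp only [Module.End.pow_apply, AddMonoidHom.coe_toIntLinearMap] at hD
  exact ⟨hD hk, hD hk⟩
end

section
/- Let G be a group, N a normal subgroup of G, n ≥ 1, and w ∈ FreeGroup (Fin n). Suppose both the group N and the quotient group G/N satisfy the S-type iterated identity w. Then G satisfies the S-type iterated identity w. -/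
/-- The verbal set map: the set of values of the word `w` on tuples with entries in `S`. -/
def wordSetMap {n : ℕ} (w : FreeGroup (Fin n)) (G : Type*) [Group G] : Set G → Set G :=
  fun S => {g | ∃ f : Fin n → G, (∀ i, f i ∈ S) ∧ FreeGroup.lift f w = g}

/-- `G` satisfies the S-type (solvability type) iterated identity `w`: for every finite
subset `S` of `G` some iterate of the verbal set map collapses `S` into `{1}`. -/
def IsSIteratedIdentity {n : ℕ} (w : FreeGroup (Fin n)) (G : Type*) [Group G] : Prop :=
  ∀ S : Set G, S.Finite → ∃ N : ℕ, 1 ≤ N ∧ (wordSetMap w G)^[N] S ⊆ {1}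

lemma lift_comp_hom {n : ℕ} (w : FreeGroup (Fin n)) {G H : Type*} [Group G] [Group H]
    (φ : G →* H) (f : Fin n → G) :
    FreeGroup.lift (φ ∘ f) w = φ (FreeGroup.lift f w) := by
  have : FreeGroup.lift (φ ∘ f) = φ.comp (FreeGroup.lift f) := by
    apply FreeGroup.ext_hom
    intro a
    simp
  rw [this]
  rfl

lemma image_wordSetMap {n : ℕ} (w : FreeGroup (Fin n)) {G H : Type*} [Group G] [Group H]
    (φ : G →* H) (S : Set G) :
    φ '' wordSetMap w G S = wordSetMap w H (φ '' S) := by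
  ext g
  constructor
  · rintro ⟨x, ⟨f, hf, rfl⟩, rfl⟩
    exact ⟨φ ∘ f, fun i => ⟨f i, hf i, rfl⟩, lift_comp_hom w φ f⟩
  · rintro ⟨f, hf, rfl⟩
    choose f' hf' hff' using hf
    refine ⟨FreeGroup.lift f' w, ⟨f', hf', rfl⟩, ?_⟩
    have hcf : ⇑φ ∘ f' = f := funext hff'
    rw [← lift_comp_hom w φ f', hcf]

lemma image_iterate_wordSetMap {n : ℕ} (w : FreeGroup (Fin n)) {G H : Type*} [Group G]
    [Group H] (φ : G →* H) (S : Set G) (k : ℕ) :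
    φ '' (wordSetMap w G)^[k] S = (wordSetMap w H)^[k] (φ '' S) := by
  induction k generalizing S with
  | zero => rfl
  | succ k ih =>
    rw [Function.iterate_succ_apply, Function.iterate_succ_apply, ih, image_wordSetMap]

lemma finite_wordSetMap {n : ℕ} (w : FreeGroup (Fin n)) {G : Type*} [Group G]
    {S : Set G} (hS : S.Finite) : (wordSetMap w G S).Finite := by
  have : wordSetMap w G S = (fun f : Fin n → G => FreeGroup.lift f w) ''
      Set.pi Set.univ (fun _ => S) := by
    ext g
    simp only [wordSetMap, Set.mem_setOf_eq, Set.mem_image, Set.mem_pi, Set.mem_univ,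
      forall_true_left]
  rw [this]
  exact (Set.Finite.pi fun _ => hS).image _

lemma finite_iterate_wordSetMap {n : ℕ} (w : FreeGroup (Fin n)) {G : Type*} [Group G]
    {S : Set G} (hS : S.Finite) (k : ℕ) : ((wordSetMap w G)^[k] S).Finite := by
  induction k with
  | zero => exact hS
  | succ k ih =>
    rw [Function.iterate_succ_apply']
    exact finite_wordSetMap w ih

/-- S-type iterated identities are closed under group extensions. -/
theorem isSIteratedIdentity_extension (G : Type*) [Group G] (N : Subgroup G) [N.Normal]
    (n : ℕ) (hn : 1 ≤ n) (w : FreeGroup (Fin n))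
    (hsub : IsSIteratedIdentity w N) (hquot : IsSIteratedIdentity w (G ⧸ N)) :
    IsSIteratedIdentity w G := by
  intro S hS
  obtain ⟨M, hM1, hM⟩ := hquot ((QuotientGroup.mk' N) '' S) (hS.image _)
  set T : Set G := (wordSetMap w G)^[M] S with hT
  have hTfin : T.Finite := finite_iterate_wordSetMap w hS M
  have hTN : T ⊆ (N : Set G) := by
    intro x hx
    have : QuotientGroup.mk' N x ∈ (wordSetMap w (G ⧸ N))^[M] ((QuotientGroup.mk' N) '' S) := by
      rw [← image_iterate_wordSetMap]
      exact ⟨x, hx, rfl⟩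
    have h1 : QuotientGroup.mk' N x = 1 := hM this
    simpa [QuotientGroup.eq_one_iff] using h1
  set T' : Set N := (N.subtype) ⁻¹' T with hT'
  have hT'fin : T'.Finite := hTfin.preimage (N.subtype_injective.injOn)
  have hTim : N.subtype '' T' = T := by
    apply Set.image_preimage_eq_of_subset
    intro x hx
    exact ⟨⟨x, hTN hx⟩, rfl⟩
  obtain ⟨K, hK1, hK⟩ := hsub T' hT'fin
  refine ⟨K + M, by omega, ?_⟩
  intro x hx
  rw [Function.iterate_add_apply, ← hT, ← hTim, ← image_iterate_wordSetMap] at hx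
  obtain ⟨y, hy, rfl⟩ := hx
  have : y = 1 := hK hy
  simp [this]
end
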